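/- arXiv:1812.07817 — 5 statements merged into one kernel-verified Lean document; each statement's English description precedes it below -/
import Mathlib

section
/- Let V ⊂ ℝ be a compact interval of positive length and let p be a polynomial of degree at most k−1 on V. Then the set {x ∈ V : |p(x)| ≥ 8^{-(k-1)} · sup_{y∈V} |p(y)|} has Lebesgue measure at least |V|/2. -/
/-!
Write `n = k - 1`, `θ = 8⁻ⁿ` and take any `x₀ ∈ [a, b]`. If `{|p| ≥ θ |p x₀|}` had measure
`< (b - a) / 2`, the compact set `E = {|p| ≤ θ |p x₀|}` would have measure `μ > (b - a) / 2`.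
Inverting `x ↦ |E ∩ (-∞, x]|` gives nodes `v 0 < ⋯ < v n` in `E` with `v j - v i ≥ (j - i) d`
for `d = μ / n`, so `b - a < 2 n d`. Lagrange interpolation at these nodes bounds `|p x₀|` by
`θ |p x₀|` times `∑ᵢ ∏_{j ≠ i} |x₀ - v j| / |v i - v j|`. Each denominator is at least
`dⁿ i! (n - i)!`, and pairing the factors `j` and `n - j` of the numerators bounds them by
`2 (2n)! / n! · dⁿ`; hence the sum is `< 2 · C(2n, n) · 2ⁿ ≤ 8ⁿ`, a contradiction.
-/

open MeasureTheory Set Finset Polynomial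
open scoped Nat

theorem Lagrange.norm_eval_le_sum {F ι : Type*} [NormedField F] [DecidableEq ι] {s : Finset ι}
    {v : ι → F} (hvs : Set.InjOn v s) {p : F[X]} (hp : p.degree < #s) (x : F) :
    ‖p.eval x‖ ≤ ∑ i ∈ s, ‖p.eval (v i)‖ * ∏ j ∈ s.erase i, ‖x - v j‖ / ‖v i - v j‖ := by
  conv_lhs => rw [Lagrange.eq_interpolate hvs hp, Lagrange.interpolate_apply, eval_finsetSum]
  refine (norm_sum_le _ _).trans_eq (sum_congr rfl fun i _ => ?_)
  simp [Lagrange.basis, Lagrange.basisDivisor, eval_prod, norm_prod, div_eq_inv_mul]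

section DistributionFunction

variable {E : Set ℝ}

theorem IsCompact.measureReal_inter_Iic_mono (hE : IsCompact E) {x y : ℝ} (hxy : x ≤ y) :
    volume.real (E ∩ Iic x) ≤ volume.real (E ∩ Iic y) :=
  measureReal_mono (inter_subset_inter_right _ (Iic_subset_Iic.2 hxy))
    (hE.inter_right isClosed_Iic).measure_ne_top

theorem IsCompact.sub_le_sub_of_measureReal_inter_Iic_lt (hE : IsCompact E) {x y : ℝ}
    (h : volume.real (E ∩ Iic x) < volume.real (E ∩ Iic y)) :
    volume.real (E ∩ Iic y) - volume.real (E ∩ Iic x) ≤ y - x := by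
  have hxy : x ≤ y := le_of_not_ge fun hyx => h.not_ge (hE.measureReal_inter_Iic_mono hyx)
  have hsub : E ∩ Iic y ⊆ (E ∩ Iic x) ∪ Ioc x y := fun z ⟨hzE, hzy⟩ =>
    (le_or_gt z x).imp (fun hzx => ⟨hzE, hzx⟩) fun hxz => ⟨hxz, hzy⟩
  have := (measureReal_mono hsub (measure_union_ne_top
    (hE.inter_right isClosed_Iic).measure_ne_top (measure_Ioc_lt_top (μ := volume)).ne)).trans
    (measureReal_union_le _ _)
  rw [Real.volume_real_Ioc_of_le hxy] at this
  linarith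

theorem IsCompact.continuous_measureReal_inter_Iic (hE : IsCompact E) :
    Continuous fun x => volume.real (E ∩ Iic x) := by
  refine (LipschitzWith.of_le_add fun x y => ?_).continuous
  rcases le_or_gt (volume.real (E ∩ Iic x)) (volume.real (E ∩ Iic y)) with h | h
  · linarith [dist_nonneg (x := x) (y := y)]
  · linarith [hE.sub_le_sub_of_measureReal_inter_Iic_lt h, Real.dist_eq x y, le_abs_self (x - y)]

theorem IsCompact.exists_mem_measureReal_inter_Iic_eq (hE : IsCompact E) (hne : E.Nonempty) {c : ℝ}
    (hc : c ∈ Icc 0 (volume.real E)) : ∃ x ∈ E, volume.real (E ∩ Iic x) = c := by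
  have hlo : volume.real (E ∩ Iic (sInf E)) ≤ c := by
    have hsub : E ∩ Iic (sInf E) ⊆ {sInf E} := fun z ⟨hzE, hz⟩ =>
      le_antisymm hz (csInf_le hE.bddBelow hzE)
    calc volume.real (E ∩ Iic (sInf E)) ≤ volume.real ({sInf E} : Set ℝ) :=
          measureReal_mono hsub (by simp)
      _ = 0 := by simp [Measure.real]
      _ ≤ c := hc.1
  have hhi : volume.real (E ∩ Iic (sSup E)) = volume.real E := by
    rw [inter_eq_left.2 fun z hz => Set.mem_Iic.2 (le_csSup hE.bddAbove hz)]
  obtain ⟨x₁, hx₁, hfx₁⟩ := intermediate_value_Icc (csInf_le_csSup hne hE.bddBelow hE.bddAbove)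
    hE.continuous_measureReal_inter_Iic.continuousOn ⟨hlo, hhi ▸ hc.2⟩
  have hK : IsCompact (E ∩ Iic x₁) := hE.inter_right isClosed_Iic
  have hx₀ : sSup (E ∩ Iic x₁) ∈ E ∩ Iic x₁ := hK.sSup_mem ⟨sInf E, hE.sInf_mem hne, hx₁.1⟩
  refine ⟨_, hx₀.1, le_antisymm ((hE.measureReal_inter_Iic_mono hx₀.2).trans_eq hfx₁) ?_⟩
  -- no point of `E` lies strictly between `sSup (E ∩ Iic x₁)` and `x₁`
  exact hfx₁ ▸ measureReal_mono (fun z hz => ⟨hz.1, le_csSup hK.bddAbove hz⟩)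
    (hE.inter_right isClosed_Iic).measure_ne_top

theorem IsCompact.exists_nodes_of_mul_le_measureReal (hE : IsCompact E) (hne : E.Nonempty)
    (n : ℕ) {d : ℝ} (hd : 0 < d) (hnd : n * d ≤ volume.real E) :
    ∃ v : ℕ → ℝ, (∀ i ≤ n, v i ∈ E) ∧
      ∀ i j, i ≤ j → j ≤ n → ((j : ℝ) - i) * d ≤ v j - v i := by
  have hnode : ∀ i, ∃ x, i ≤ n →
      x ∈ E ∧ volume.real (E ∩ Iic x) = volume.real E - ((n : ℝ) - i) * d := by
    intro i
    by_cases hi : i ≤ n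
    · have hin : (i : ℝ) ≤ n := by exact_mod_cast hi
      obtain ⟨x, hxE, hx⟩ := hE.exists_mem_measureReal_inter_Iic_eq hne
        (c := volume.real E - ((n : ℝ) - i) * d)
        ⟨by nlinarith [i.cast_nonneg (α := ℝ)], by nlinarith⟩
      exact ⟨x, fun _ => ⟨hxE, hx⟩⟩
    · exact ⟨0, fun h => absurd h hi⟩
  choose v hv using hnode
  refine ⟨v, fun i hi => (hv i hi).1, fun i j hij hjn => ?_⟩
  rcases hij.eq_or_lt with rfl | hlt
  · simp
  have hij' : (i : ℝ) < j := by exact_mod_cast hlt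
  have h := hE.sub_le_sub_of_measureReal_inter_Iic_lt (x := v i) (y := v j)
    (by rw [(hv i (hlt.le.trans hjn)).2, (hv j hjn).2]; nlinarith)
  rw [(hv i (hlt.le.trans hjn)).2, (hv j hjn).2] at h
  linarith

end DistributionFunction

theorem Nat.two_mul_centralBinom_le_four_pow {n : ℕ} (hn : n ≠ 0) :
    2 * n.centralBinom ≤ 4 ^ n := by
  obtain ⟨m, rfl⟩ := Nat.exists_eq_succ_of_ne_zero hn
  rw [Nat.centralBinom_eq_two_mul_choose, show 2 * (m + 1) = 2 * m + 1 + 1 by ring,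
    Nat.choose_succ_succ, Nat.choose_symm_half, pow_succ]
  linarith [Nat.choose_middle_le_pow m]

theorem prod_range_erase_abs_natCast_sub {n i : ℕ} (hi : i ≤ n) :
    ∏ j ∈ (range (n + 1)).erase i, |(i : ℝ) - j| = i ! * (n - i)! := by
  induction n, hi using Nat.le_induction with
  | base =>
    rw [range_add_one, erase_insert notMem_range_self, Nat.sub_self, Nat.factorial_zero,
      Nat.cast_one, mul_one, ← Nat.descFactorial_self, Nat.descFactorial_eq_prod_range,
      Nat.cast_prod]
    refine prod_congr rfl fun j hj => ?_
    have hji : j < i := mem_range.1 hj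
    rw [Nat.cast_sub hji.le, abs_of_pos (sub_pos.2 (by exact_mod_cast hji))]
  | succ n hin ih =>
    have hin' : (i : ℝ) ≤ n := by exact_mod_cast hin
    rw [range_add_one (n := n + 1), erase_insert_of_ne (by omega), prod_insert (by simp), ih,
      Nat.succ_sub hin, Nat.factorial_succ, abs_of_nonpos (by push_cast; linarith)]
    push_cast [Nat.cast_sub hin]
    ring

theorem add_abs_sub_mul_add_abs_add_lt {K w t : ℝ} (hK : 0 < K) (hw : |w| < 2 * K)
    (ht : |t| ≤ K) : (K + |w - t|) * (K + |w + t|) < (3 * K - t) * (3 * K + t) := by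
  obtain ⟨hw₁, hw₂⟩ := abs_lt.1 hw
  obtain ⟨ht₁, ht₂⟩ := abs_le.1 ht
  rcases abs_cases (w - t) with ⟨h₁, _⟩ | ⟨h₁, _⟩ <;>
    rcases abs_cases (w + t) with ⟨h₂, _⟩ | ⟨h₂, _⟩ <;> rw [h₁, h₂] <;> nlinarith

theorem prod_range_succ_lt_prod_of_mul_reflect_lt {n : ℕ} {f g : ℕ → ℝ} (hf : ∀ j ≤ n, 0 < f j)
    (hg : ∀ j ≤ n, 0 ≤ g j) (h : ∀ j ≤ n, f j * f (n - j) < g j * g (n - j)) :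
    ∏ j ∈ range (n + 1), f j < ∏ j ∈ range (n + 1), g j := by
  have hsq (u : ℕ → ℝ) :
      (∏ j ∈ range (n + 1), u j) ^ 2 = ∏ j ∈ range (n + 1), u j * u (n - j) := by
    rw [prod_mul_distrib, sq, ← prod_range_reflect u (n + 1)]
    simp
  have hmem {j : ℕ} (hj : j ∈ range (n + 1)) : j ≤ n := Nat.lt_succ_iff.1 (mem_range.1 hj)
  rw [← pow_lt_pow_iff_left₀ (prod_nonneg fun j hj => (hf j (hmem hj)).le)
    (prod_nonneg fun j hj => hg j (hmem hj)) two_ne_zero, hsq, hsq]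
  exact prod_lt_prod_of_nonempty (fun j hj => mul_pos (hf j (hmem hj)) (hf _ (Nat.sub_le _ _)))
    (fun j hj => h j (hmem hj)) nonempty_range_add_one

theorem prod_range_succ_add_abs_sub_div_two_lt {n : ℕ} {d w : ℝ} (hnd : 0 < n * d)
    (hw : |w| < 2 * (n * d)) :
    ∏ j ∈ range (n + 1), (n * d + |w - (2 * j - n) * d|) / 2
      < n * d * ((n.centralBinom * n ! : ℕ) * d ^ n) := by
  have hd : 0 < d := pos_of_mul_pos_right hnd n.cast_nonneg
  have hpair : ∀ j ≤ n, (n * d + |w - (2 * j - n) * d|) / 2 *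
      ((n * d + |w - (2 * (n - j : ℕ) - n) * d|) / 2)
        < ((n + j : ℕ) * d) * ((n + (n - j) : ℕ) * d) := by
    intro j hj
    have hjn : (j : ℝ) ≤ n := by exact_mod_cast hj
    have ht : |(2 * (j : ℝ) - n) * d| ≤ n * d := by
      rw [abs_mul, abs_of_pos hd]
      exact mul_le_mul_of_nonneg_right (abs_le.2 ⟨by linarith, by linarith⟩) hd.le
    have key := add_abs_sub_mul_add_abs_add_lt hnd hw ht
    push_cast [Nat.cast_sub hj]
    rw [show (2 * ((n : ℝ) - j) - n) * d = -((2 * j - n) * d) by ring, sub_neg_eq_add]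
    nlinarith
  have hasc : ∏ j ∈ range n, (n + (j + 1)) = n ! * n.centralBinom := by
    rw [Nat.centralBinom_eq_two_mul_choose, two_mul,
      ← Nat.ascFactorial_eq_factorial_mul_choose, Nat.ascFactorial_eq_prod_range]
    exact prod_congr rfl fun j _ => by ring
  calc _ < ∏ j ∈ range (n + 1), ((n + j : ℕ) * d) :=
        prod_range_succ_lt_prod_of_mul_reflect_lt
          (fun j _ => by positivity) (fun j _ => by positivity) hpair
    _ = n * d * ((n.centralBinom * n ! : ℕ) * d ^ n) := by
        rw [prod_range_succ', prod_mul_distrib, prod_const, card_range, ← Nat.cast_prod, hasc]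
        push_cast
        ring

section SeparatedNodes

variable {n : ℕ} {a b d x : ℝ} {v : ℕ → ℝ}

theorem prod_erase_abs_sub_lt_of_separated
    (hsep : ∀ i j, i ≤ j → j ≤ n → ((j : ℝ) - i) * d ≤ v j - v i) (ha : a ≤ v 0) (hb : v n ≤ b)
    (hx : x ∈ Icc a b) (hL : b - a < 2 * n * d) {i : ℕ} (hi : i ≤ n) :
    ∏ j ∈ (range (n + 1)).erase i, |x - v j| < 2 * (n.centralBinom * n ! : ℕ) * d ^ n := by
  have hnd : 0 < n * d := by linarith [hx.1, hx.2]
  -- `g j` bounds `|x - v j|` because `v j ∈ [a + j d, b - (n - j) d]` and `b - a ≤ 2 n d`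
  set g : ℕ → ℝ := fun j => (n * d + |(2 * x - a - b) - (2 * j - n) * d|) / 2 with hg_def
  have hvg : ∀ j ≤ n, |x - v j| ≤ g j := by
    intro j hj
    have h₀ : (j : ℝ) * d ≤ v j - v 0 := by simpa using hsep 0 j (Nat.zero_le j) hj
    have h₁ := hsep j n hj le_rfl
    have hw := abs_le.1 (le_refl |(2 * x - a - b) - (2 * j - n) * d|)
    rw [hg_def, abs_sub_le_iff]
    constructor <;> linarith [hx.1, hx.2]
  have hg : ∀ j, n * d / 2 ≤ g j := fun j => by
    simp only [hg_def]; linarith [abs_nonneg ((2 * x - a - b) - (2 * j - n) * d)]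
  have hprod := prod_range_succ_add_abs_sub_div_two_lt hnd
    (w := 2 * x - a - b) (abs_lt.2 ⟨by linarith [hx.1], by linarith [hx.2]⟩)
  have hrest : 0 ≤ ∏ j ∈ (range (n + 1)).erase i, g j :=
    prod_nonneg fun j _ => (by positivity : (0 : ℝ) ≤ n * d / 2).trans (hg j)
  calc ∏ j ∈ (range (n + 1)).erase i, |x - v j| ≤ ∏ j ∈ (range (n + 1)).erase i, g j :=
        prod_le_prod (fun _ _ => abs_nonneg _) fun j hj =>
          hvg j (Nat.lt_succ_iff.1 (mem_range.1 (mem_of_mem_erase hj)))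
    _ < _ := by
        refine lt_of_mul_lt_mul_right (?_ : _ * (n * d / 2) < _ * (n * d / 2)) (by positivity)
        linarith [prod_erase_mul (range (n + 1)) g (mem_range.2 (Nat.lt_succ_of_le hi)),
          mul_le_mul_of_nonneg_left (hg i) hrest]

theorem pow_mul_factorial_mul_factorial_le_prod_erase_abs_sub
    (hsep : ∀ i j, i ≤ j → j ≤ n → ((j : ℝ) - i) * d ≤ v j - v i) (hd : 0 ≤ d) {i : ℕ}
    (hi : i ≤ n) : d ^ n * (i ! * (n - i)! : ℝ) ≤ ∏ j ∈ (range (n + 1)).erase i, |v i - v j| := by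
  calc d ^ n * (i ! * (n - i)! : ℝ) = ∏ j ∈ (range (n + 1)).erase i, (|(i : ℝ) - j| * d) := by
        rw [prod_mul_distrib, prod_const, card_erase_of_mem (mem_range.2 (Nat.lt_succ_of_le hi)),
          card_range, Nat.succ_sub_one, prod_range_erase_abs_natCast_sub hi, mul_comm]
    _ ≤ ∏ j ∈ (range (n + 1)).erase i, |v i - v j| := by
        refine prod_le_prod (fun _ _ => by positivity) fun j hj => ?_
        have hj : j ≤ n := Nat.lt_succ_iff.1 (mem_range.1 (mem_of_mem_erase hj))
        rcases le_total i j with hij | hji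
        · rw [abs_sub_comm, abs_of_nonneg (by simpa using hij)]
          exact (hsep i j hij hj).trans (le_abs_self _ |>.trans_eq (abs_sub_comm _ _))
        · rw [abs_of_nonneg (by simpa using hji)]
          exact (hsep j i hji hi).trans (le_abs_self _)

theorem prod_erase_abs_sub_div_abs_sub_lt
    (hsep : ∀ i j, i ≤ j → j ≤ n → ((j : ℝ) - i) * d ≤ v j - v i) (ha : a ≤ v 0) (hb : v n ≤ b)
    (hx : x ∈ Icc a b) (hL : b - a < 2 * n * d) {i : ℕ} (hi : i ≤ n) :
    ∏ j ∈ (range (n + 1)).erase i, |x - v j| / |v i - v j| < 2 * n.centralBinom * n.choose i := by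
  have hd : 0 < d := pos_of_mul_pos_right (by linarith [hx.1, hx.2] : 0 < 2 * n * d) (by positivity)
  rw [prod_div_distrib]
  calc _ < 2 * (n.centralBinom * n ! : ℕ) * d ^ n / (d ^ n * (i ! * (n - i)! : ℝ)) :=
        div_lt_div₀ (prod_erase_abs_sub_lt_of_separated hsep ha hb hx hL hi)
          (pow_mul_factorial_mul_factorial_le_prod_erase_abs_sub hsep hd.le hi) (by positivity)
          (by positivity)
    _ = 2 * n.centralBinom * n.choose i := by
        have h := Nat.choose_mul_factorial_mul_factorial hi
        rw [div_eq_iff (by positivity), ← h]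
        push_cast
        ring

theorem sum_prod_erase_abs_sub_div_abs_sub_lt
    (hsep : ∀ i j, i ≤ j → j ≤ n → ((j : ℝ) - i) * d ≤ v j - v i) (ha : a ≤ v 0) (hb : v n ≤ b)
    (hx : x ∈ Icc a b) (hL : b - a < 2 * n * d) :
    ∑ i ∈ range (n + 1), ∏ j ∈ (range (n + 1)).erase i, |x - v j| / |v i - v j| < 8 ^ n := by
  have hn : n ≠ 0 := by rintro rfl; simp at hL; linarith [hx.1, hx.2]
  calc _ < ∑ i ∈ range (n + 1), (2 * n.centralBinom * n.choose i : ℝ) :=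
        sum_lt_sum_of_nonempty nonempty_range_add_one fun i hi =>
          prod_erase_abs_sub_div_abs_sub_lt hsep ha hb hx hL (Nat.lt_succ_iff.1 (mem_range.1 hi))
    _ = (2 * n.centralBinom * 2 ^ n : ℕ) := by
        rw [← mul_sum, ← Nat.sum_range_choose]
        push_cast
        rfl
    _ ≤ (4 ^ n * 2 ^ n : ℕ) := by
        exact_mod_cast Nat.mul_le_mul_right _ (Nat.two_mul_centralBinom_le_four_pow hn)
    _ = 8 ^ n := by push_cast; rw [← mul_pow]; norm_num

end SeparatedNodes

theorem Polynomial.abs_eval_lt_eight_pow_mul {E : Set ℝ} {a b : ℝ} (hE : IsCompact E)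
    (hEab : E ⊆ Icc a b) (hvol : b - a < 2 * volume.real E) {n : ℕ} (hn : n ≠ 0)
    {p : ℝ[X]} (hp : p.natDegree ≤ n) {m : ℝ} (hm : 0 < m) (hpE : ∀ y ∈ E, |p.eval y| ≤ m)
    {x : ℝ} (hx : x ∈ Icc a b) : |p.eval x| < 8 ^ n * m := by
  have hE₀ : 0 < volume.real E := by linarith [hx.1, hx.2]
  have hne : E.Nonempty := nonempty_iff_ne_empty.2 fun h => by simp [h] at hE₀
  have hn₀ : (0 : ℝ) < n := Nat.cast_pos.2 (Nat.pos_of_ne_zero hn)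
  set d := volume.real E / n
  have hnd : n * d = volume.real E := mul_div_cancel₀ _ hn₀.ne'
  have hd : 0 < d := div_pos hE₀ hn₀
  obtain ⟨v, hvE, hsep⟩ := hE.exists_nodes_of_mul_le_measureReal hne n hd hnd.le
  have hmono : StrictMonoOn v (Finset.range (n + 1) : Set ℕ) := fun i _ j hj hij => by
    have : (0 : ℝ) < (j - i) * d := mul_pos (by simp [hij]) hd
    linarith [hsep i j hij.le (Nat.lt_succ_iff.1 (mem_range.1 hj))]
  have hdeg : p.degree < #(range (n + 1)) := by
    rw [card_range]
    exact (degree_le_natDegree).trans_lt (by exact_mod_cast Nat.lt_succ_of_le hp)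
  calc |p.eval x| ≤ ∑ i ∈ range (n + 1),
        |p.eval (v i)| * ∏ j ∈ (range (n + 1)).erase i, |x - v j| / |v i - v j| := by
        simpa only [Real.norm_eq_abs] using Lagrange.norm_eval_le_sum hmono.injOn hdeg x
    _ ≤ ∑ i ∈ range (n + 1), m * ∏ j ∈ (range (n + 1)).erase i, |x - v j| / |v i - v j| :=
        sum_le_sum fun i hi => mul_le_mul_of_nonneg_right
          (hpE _ (hvE i (Nat.lt_succ_iff.1 (mem_range.1 hi)))) (by positivity)
    _ < m * 8 ^ n := by
        rw [← mul_sum]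
        exact mul_lt_mul_of_pos_left (sum_prod_erase_abs_sub_div_abs_sub_lt hsep
          (hEab (hvE 0 n.zero_le)).1 (hEab (hvE n le_rfl)).2 hx (by linarith)) hm
    _ = 8 ^ n * m := mul_comm _ _

theorem Polynomial.sub_le_two_mul_measureReal_le_abs_eval {a b x₀ : ℝ} (hab : a ≤ b) {n : ℕ}
    {p : ℝ[X]} (hp : p.natDegree ≤ n) (hx₀ : x₀ ∈ Icc a b) :
    b - a ≤ 2 * volume.real {x ∈ Icc a b | ((8 : ℝ) ^ n)⁻¹ * |p.eval x₀| ≤ |p.eval x|} := by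
  set G := {x ∈ Icc a b | ((8 : ℝ) ^ n)⁻¹ * |p.eval x₀| ≤ |p.eval x|}
  by_cases htriv : n = 0 ∨ p.eval x₀ = 0
  · have hG : G = Icc a b := by
      refine (sep_subset _ _).antisymm fun x hx => ⟨hx, ?_⟩
      rcases htriv with rfl | h₀
      · rw [pow_zero, inv_one, one_mul, eq_C_of_natDegree_eq_zero (p := p) (Nat.le_zero.1 hp),
          eval_C, eval_C]
      · simp [h₀]
    rw [hG, Real.volume_real_Icc_of_le hab]
    linarith
  obtain ⟨hn, h₀⟩ := not_or.1 htriv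
  by_contra! hG
  set E := {x ∈ Icc a b | |p.eval x| ≤ ((8 : ℝ) ^ n)⁻¹ * |p.eval x₀|}
  have hE : IsCompact E :=
    isCompact_Icc.inter_right (isClosed_le (continuous_abs.comp p.continuous) continuous_const)
  have hvol : b - a < 2 * volume.real E := by
    have hcover : Icc a b ⊆ E ∪ G := fun x hx => (le_total _ _).imp (⟨hx, ·⟩) (⟨hx, ·⟩)
    have hfin : volume (E ∪ G) ≠ ⊤ := measure_ne_top_of_subset
      (union_subset (sep_subset _ _) (sep_subset _ _)) measure_Icc_lt_top.ne
    have := (measureReal_mono hcover hfin).trans (measureReal_union_le E G)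
    rw [Real.volume_real_Icc_of_le hab] at this
    linarith
  have h := Polynomial.abs_eval_lt_eight_pow_mul hE (sep_subset _ _) hvol hn hp
    (by positivity) (fun y hy => hy.2) hx₀
  rw [mul_inv_cancel_left₀ (by positivity)] at h
  exact h.false

theorem stmt_0_general (k : ℕ) (a b : ℝ) (hab : a < b) (p : Polynomial ℝ)
    (hdeg : p.natDegree ≤ k - 1) :
    volume ({x ∈ Set.Icc a b |
        ((8 : ℝ) ^ (k - 1))⁻¹ * (⨆ y : Set.Icc a b, |p.eval (y : ℝ)|) ≤ |p.eval x|})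
      ≥ volume (Set.Icc a b) / 2 := by
  obtain ⟨x₀, hx₀, hmax⟩ := isCompact_Icc.exists_isMaxOn (f := fun y => |p.eval y|)
    (Set.nonempty_Icc.2 hab.le) (by fun_prop)
  rw [hmax.iSup_eq hx₀, ge_iff_le, Real.volume_Icc, ← ENNReal.ofReal_ofNat 2,
    ← ENNReal.ofReal_div_of_pos two_pos]
  refine ENNReal.ofReal_le_of_le_toReal ?_
  have := Polynomial.sub_le_two_mul_measureReal_le_abs_eval hab.le hdeg hx₀
  rw [Measure.real] at this
  linarith

/-- Corollary of Remez' inequality: the set where a polynomial of degree ≤ k-1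
is at least `8^{-(k-1)}` times its sup on a compact interval has measure ≥ half
the interval. -/
theorem stmt_0 (k : ℕ) (hk : 1 ≤ k) (a b : ℝ) (hab : a < b) (p : Polynomial ℝ)
    (hdeg : p.natDegree ≤ k - 1) :
    volume ({x ∈ Set.Icc a b |
        ((8 : ℝ) ^ (k - 1))⁻¹ * (⨆ y : Set.Icc a b, |p.eval (y : ℝ)|) ≤ |p.eval x|})
      ≥ volume (Set.Icc a b) / 2 :=
  stmt_0_general k a b hab p hdeg
end

section
/- Let V ⊂ ℝ be a compact interval and E ⊂ V a measurable subset of positive measure. Then for every polynomial p of degree at most k−1, sup_{x∈V} |p(x)| ≤ (4|V|/|E|)^{k-1} · sup_{x∈E} |p(x)|, where |·| denotes Lebesgue measure. -/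
/-!
Write `μ = |E|` and `F x = |E ∩ (-∞, x]|`; `F` is nondecreasing, 1-Lipschitz, and runs from `0`
to `μ` on `[a, b]`. Pulling the `n + 1` zeros `tᵢ` of the Chebyshev polynomial `Tₙ₊₁`, placed at
the levels `μ (1 + tᵢ) / 2`, back through `F` gives points `Xᵢ ∈ closure E` with
`|Xᵢ - Xⱼ| ≥ μ / 2 * |tᵢ - tⱼ|`. From `Tₙ₊₁ = 2ⁿ ∏ (X - tⱼ)` and `T'ₙ₊₁ = (n + 1) Uₙ` one gets
`∏_{j ≠ i} |tᵢ - tⱼ| ≥ (n + 1) / 2ⁿ`, so on `[a, b]` every Lagrange basis polynomial of the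
nodes `Xᵢ` is at most `(4 (b - a) / μ)ⁿ / (n + 1)`, and Lagrange interpolation of `p` at the
`Xᵢ` gives the bound.
-/

open MeasureTheory Set Polynomial Real

/-- `cos (chebyshevAngle m i)` are the zeros of the Chebyshev polynomial `Tₘ`. -/
noncomputable def chebyshevAngle (m : ℕ) (i : Fin m) : ℝ := (2 * i + 1) * π / (2 * m)

section Chebyshev

open Finset

variable {m : ℕ}

lemma chebyshevAngle_mem_Ioo (i : Fin m) : chebyshevAngle m i ∈ Ioo 0 π := by
  have hi : (2 * i + 1 : ℝ) < 2 * m := by exact_mod_cast (by omega : 2 * (i : ℕ) + 1 < 2 * m)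
  have hm : (0 : ℝ) < m := by linarith [(Nat.cast_nonneg i : (0 : ℝ) ≤ i)]
  constructor
  · unfold chebyshevAngle; positivity
  · rw [chebyshevAngle, div_lt_iff₀ (by positivity)]
    nlinarith [pi_pos]

lemma natCast_mul_chebyshevAngle (i : Fin m) : m * chebyshevAngle m i = i * π + π / 2 := by
  have hm : (m : ℝ) ≠ 0 := by exact_mod_cast (Fin.pos i).ne'
  rw [chebyshevAngle]
  field_simp

lemma cos_natCast_mul_chebyshevAngle (i : Fin m) : cos (m * chebyshevAngle m i) = 0 := by
  rw [natCast_mul_chebyshevAngle, cos_add_pi_div_two, sin_nat_mul_pi, neg_zero]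

lemma abs_sin_natCast_mul_chebyshevAngle (i : Fin m) : |sin (m * chebyshevAngle m i)| = 1 := by
  rw [natCast_mul_chebyshevAngle, sin_add_pi_div_two, cos_nat_mul_pi, abs_pow, abs_neg, abs_one,
    one_pow]

lemma injective_cos_chebyshevAngle : Function.Injective (cos ∘ chebyshevAngle m) := by
  intro i j hij
  have hθ := injOn_cos (Ioo_subset_Icc_self (chebyshevAngle_mem_Ioo i))
    (Ioo_subset_Icc_self (chebyshevAngle_mem_Ioo j)) hij
  have hm : (m : ℝ) ≠ 0 := by exact_mod_cast (Fin.pos i).ne'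
  rw [chebyshevAngle, chebyshevAngle] at hθ
  field_simp at hθ
  exact Fin.ext (by exact_mod_cast (by linarith [pi_pos] : ((i : ℕ) : ℝ) = j))

lemma Polynomial.Chebyshev.T_real_eq_C_mul_nodal (m : ℕ) :
    T ℝ m = Polynomial.C (2 ^ (m - 1)) * Lagrange.nodal univ (cos ∘ chebyshevAngle m) := by
  have hdeg : (T ℝ m).degree = m := by simp
  have hdeg' :
      (Polynomial.C (2 ^ (m - 1) : ℝ) * Lagrange.nodal univ (cos ∘ chebyshevAngle m)).degree = m := by
    rw [degree_C_mul (by positivity), Lagrange.degree_nodal, card_univ, Fintype.card_fin]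
  refine Polynomial.eq_of_degree_sub_lt_of_eval_index_eq univ
    (injective_cos_chebyshevAngle (m := m)).injOn ?_ fun i _ => ?_
  · rw [card_univ, Fintype.card_fin, ← hdeg]
    refine degree_sub_lt_left (hdeg.trans hdeg'.symm) (fun h => by simp [h] at hdeg) ?_
    rw [leadingCoeff_mul, leadingCoeff_C, (Lagrange.nodal_monic).leadingCoeff, mul_one,
      Chebyshev.leadingCoeff_T, Int.natAbs_natCast]
  · rw [eval_mul, Lagrange.eval_nodal_at_node (mem_univ i), mul_zero, Function.comp_apply,
      Chebyshev.T_real_cos, Int.cast_natCast, cos_natCast_mul_chebyshevAngle]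

lemma prod_abs_sub_cos_chebyshevAngle (i : Fin m) :
    ∏ j ∈ univ.erase i, |cos (chebyshevAngle m i) - cos (chebyshevAngle m j)|
      = m / (2 ^ (m - 1) * sin (chebyshevAngle m i)) := by
  set θ := chebyshevAngle m i
  have hsin : 0 < sin θ :=
    sin_pos_of_pos_of_lt_pi (chebyshevAngle_mem_Ioo i).1 (chebyshevAngle_mem_Ioo i).2
  -- evaluate `T'ₘ (cos θ) sin θ` once through the nodal factorisation and once through `Uₘ₋₁`
  have hderiv : 2 ^ (m - 1) * (∏ j ∈ univ.erase i, (cos θ - cos (chebyshevAngle m j))) * sin θ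
      = m * sin (m * θ) := by
    have hT := congrArg (fun q => (derivative q).eval (cos θ)) (Chebyshev.T_real_eq_C_mul_nodal m)
    have hU := Chebyshev.U_real_cos θ (m - 1)
    simp only [derivative_C_mul, eval_mul, eval_C, Chebyshev.T_derivative_eq_U, Int.cast_natCast,
      eval_natCast] at hT
    rw [show cos θ = (cos ∘ chebyshevAngle m) i from rfl,
      Lagrange.eval_nodal_derivative_eval_node_eq (mem_univ i), Lagrange.eval_nodal] at hT
    push_cast at hU
    rw [sub_add_cancel] at hU
    rw [← hU, ← mul_assoc]
    exact congrArg (· * sin θ) hT.symm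
  have habs := congrArg abs hderiv
  rw [abs_mul, abs_mul, abs_mul, abs_prod, abs_of_pos hsin, abs_of_pos (by positivity),
    abs_sin_natCast_mul_chebyshevAngle, Nat.abs_cast, mul_one] at habs
  rw [eq_div_iff (by positivity), ← habs]
  ring

lemma div_two_pow_le_prod_abs_sub_cos_chebyshevAngle (i : Fin m) :
    m / 2 ^ (m - 1) ≤
      ∏ j ∈ univ.erase i, |cos (chebyshevAngle m i) - cos (chebyshevAngle m j)| := by
  have hsin : 0 < sin (chebyshevAngle m i) :=
    sin_pos_of_pos_of_lt_pi (chebyshevAngle_mem_Ioo i).1 (chebyshevAngle_mem_Ioo i).2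
  rw [prod_abs_sub_cos_chebyshevAngle]
  exact div_le_div_of_nonneg_left (by positivity) (by positivity)
    (mul_le_of_le_one_right (by positivity) (sin_le_one _))

end Chebyshev

noncomputable def cumVolume (E : Set ℝ) (x : ℝ) : ℝ := (volume (E ∩ Iic x)).toReal

section CumVolume

variable {E : Set ℝ}

lemma monotone_cumVolume (hE : volume E ≠ ⊤) : Monotone (cumVolume E) := fun _ _ hxy =>
  ENNReal.toReal_mono (measure_ne_top_of_subset inter_subset_left hE)
    (measure_mono (inter_subset_inter_right _ (Iic_subset_Iic.mpr hxy)))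

lemma cumVolume_le_add_sub (hE : volume E ≠ ⊤) {x y : ℝ} (hxy : x ≤ y) :
    cumVolume E y ≤ cumVolume E x + (y - x) := by
  have hx : volume (E ∩ Iic x) ≠ ⊤ := measure_ne_top_of_subset inter_subset_left hE
  have hsub : E ∩ Iic y ⊆ (E ∩ Iic x) ∪ Ioc x y := fun z ⟨hzE, hzy⟩ =>
    (le_or_gt z x).imp (fun hzx => ⟨hzE, hzx⟩) fun hxz => ⟨hxz, hzy⟩
  have h := (measure_mono hsub).trans (measure_union_le (μ := volume) _ _)
  rw [Real.volume_Ioc] at h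
  rw [cumVolume, cumVolume, ← ENNReal.toReal_ofReal (sub_nonneg.mpr hxy),
    ← ENNReal.toReal_add hx ENNReal.ofReal_ne_top]
  exact ENNReal.toReal_mono (ENNReal.add_ne_top.mpr ⟨hx, ENNReal.ofReal_ne_top⟩) h

lemma lipschitzWith_one_cumVolume (hE : volume E ≠ ⊤) : LipschitzWith 1 (cumVolume E) := by
  refine LipschitzWith.of_le_add fun x y => ?_
  rcases le_total x y with hxy | hyx
  · linarith [monotone_cumVolume hE hxy, dist_nonneg (x := x) (y := y)]
  · linarith [cumVolume_le_add_sub hE hyx, Real.dist_eq x y, le_abs_self (x - y)]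

/-- The leftmost point where `cumVolume E` equals `c` works, since `cumVolume E` is constant on
every interval free of `E`. -/
lemma exists_mem_closure_cumVolume_eq {a b : ℝ} (hE : E ⊆ Icc a b) {c : ℝ} (hc : 0 < c)
    (hcE : c ≤ (volume E).toReal) : ∃ x ∈ closure E, cumVolume E x = c := by
  have hfin : volume E ≠ ⊤ := measure_ne_top_of_subset hE measure_Icc_lt_top.ne
  have hmono := monotone_cumVolume hfin
  have hcont := (lipschitzWith_one_cumVolume hfin).continuous
  have hFa : cumVolume E a = 0 := by
    refine ENNReal.toReal_eq_zero_iff _ |>.mpr (Or.inl (measure_mono_null (t := {a}) ?_ (by simp)))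
    exact fun z ⟨hzE, hza⟩ => le_antisymm hza (hE hzE).1
  have hFb : cumVolume E b = (volume E).toReal := by
    rw [cumVolume, inter_eq_left.mpr fun z hz => mem_Iic.mpr (hE hz).2]
  set S := cumVolume E ⁻¹' {c}
  have hSne : S.Nonempty :=
    mem_range_of_exists_le_of_exists_ge hcont ⟨a, hFa ▸ hc.le⟩ ⟨b, hFb ▸ hcE⟩
  have hSbdd : BddBelow S := ⟨a, fun y (hy : cumVolume E y = c) => by
    by_contra! hya
    linarith [hmono hya.le]⟩
  have hxS : sInf S ∈ S := (isClosed_singleton.preimage hcont).csInf_mem hSne hSbdd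
  refine ⟨sInf S, ?_, hxS⟩
  by_contra hx
  obtain ⟨ε, hε, hfar⟩ : ∃ ε > 0, ∀ z ∈ E, ε ≤ dist (sInf S) z := by
    simpa [Metric.mem_closure_iff] using hx
  have hsub : E ∩ Iic (sInf S) ⊆ E ∩ Iic (sInf S - ε) := fun z ⟨hzE, hzx⟩ => by
    have := hfar z hzE
    rw [Real.dist_eq, abs_of_nonneg (sub_nonneg.mpr hzx)] at this
    exact ⟨hzE, mem_Iic.mpr (by linarith)⟩
  have hleft : sInf S - ε ∈ S := le_antisymm (hxS ▸ hmono (by linarith)) <| hxS ▸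
    ENNReal.toReal_mono (measure_ne_top_of_subset inter_subset_left hfin) (measure_mono hsub)
  linarith [csInf_le hSbdd hleft]

end CumVolume

lemma abs_eval_le_sum_mul_prod_abs_div {ι : Type*} [DecidableEq ι] {s : Finset ι} {v : ι → ℝ}
    (hvs : InjOn v s) {p : ℝ[X]} (hp : p.degree < s.card) (x : ℝ) :
    |p.eval x| ≤ ∑ i ∈ s, |p.eval (v i)| * ∏ j ∈ s.erase i, |x - v j| / |v i - v j| := by
  conv_lhs => rw [Lagrange.eq_interpolate hvs hp, Lagrange.interpolate_apply, eval_finsetSum]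
  refine (Finset.abs_sum_le_sum_abs _ _).trans (le_of_eq (Finset.sum_congr rfl fun i _ => ?_))
  simp only [Lagrange.basis, Lagrange.basisDivisor, eval_mul, eval_C, eval_prod, eval_sub, eval_X,
    abs_mul, Finset.abs_prod, abs_inv, div_eq_inv_mul]

lemma abs_eval_le_of_le_prod_abs_sub {n : ℕ} {v : Fin (n + 1) → ℝ} (hv : Function.Injective v)
    {p : ℝ[X]} (hp : p.natDegree ≤ n) {M L δ x : ℝ} (hM : ∀ i, |p.eval (v i)| ≤ M)
    (hL : ∀ j, |x - v j| ≤ L) (hδ : 0 < δ)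
    (hsep : ∀ i, δ ≤ ∏ j ∈ Finset.univ.erase i, |v i - v j|) :
    |p.eval x| ≤ (n + 1) * M * L ^ n / δ := by
  have hM0 : 0 ≤ M := (abs_nonneg _).trans (hM 0)
  have hL0 : 0 ≤ L := (abs_nonneg _).trans (hL 0)
  have hdeg : p.degree < (Finset.univ : Finset (Fin (n + 1))).card := by
    rw [Finset.card_univ, Fintype.card_fin]
    exact (degree_le_natDegree.trans_lt (WithBot.coe_lt_coe.mpr (Nat.lt_succ_of_le hp)))
  have hbasis : ∀ i, ∏ j ∈ Finset.univ.erase i, |x - v j| / |v i - v j| ≤ L ^ n / δ := by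
    intro i
    rw [Finset.prod_div_distrib]
    refine div_le_div₀ (by positivity) ?_ hδ (hsep i)
    calc ∏ j ∈ Finset.univ.erase i, |x - v j| ≤ ∏ _j ∈ Finset.univ.erase i, L :=
          Finset.prod_le_prod (fun _ _ => abs_nonneg _) fun j _ => hL j
      _ = L ^ n := by simp [Finset.card_erase_of_mem]
  calc |p.eval x| ≤ ∑ i, |p.eval (v i)| * ∏ j ∈ Finset.univ.erase i, |x - v j| / |v i - v j| :=
        abs_eval_le_sum_mul_prod_abs_div hv.injOn hdeg x
    _ ≤ ∑ _i : Fin (n + 1), M * (L ^ n / δ) :=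
        Finset.sum_le_sum fun i _ => mul_le_mul (hM i) (hbasis i) (by positivity) hM0
    _ = (n + 1) * M * L ^ n / δ := by
        rw [Finset.sum_const, Finset.card_univ, Fintype.card_fin, nsmul_eq_mul]
        push_cast
        ring

lemma Continuous.le_ciSup_of_mem_closure {α : Type*} [TopologicalSpace α] {f : α → ℝ}
    (hf : Continuous f) {E : Set α} (hE : BddAbove (range fun y : E => f y)) {x : α}
    (hx : x ∈ closure E) : f x ≤ ⨆ y : E, f y :=
  closure_minimal (fun y hy => le_ciSup hE ⟨y, hy⟩) (isClosed_le hf continuous_const) hx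

lemma exists_nodes_mem_closure_le_prod_abs_sub (n : ℕ) {a b : ℝ} {E : Set ℝ} (hE : E ⊆ Icc a b)
    (hEpos : 0 < volume E) :
    ∃ X : Fin (n + 1) → ℝ, Function.Injective X ∧ (∀ i, X i ∈ closure E) ∧
      ∀ i, (n + 1) * ((volume E).toReal / 4) ^ n ≤ ∏ j ∈ Finset.univ.erase i, |X i - X j| := by
  set μ := (volume E).toReal
  have hμ : 0 < μ :=
    ENNReal.toReal_pos hEpos.ne' (measure_ne_top_of_subset hE measure_Icc_lt_top.ne)
  set t := cos ∘ chebyshevAngle (n + 1)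
  -- transplant the Chebyshev nodes `t i ∈ (-1, 1]` to the levels `μ (1 + t i) / 2 ∈ (0, μ]` of
  -- `cumVolume E`; as this function is 1-Lipschitz, the chosen points are at least as separated
  have hlevel : ∀ i, ∃ x ∈ closure E, cumVolume E x = μ / 2 * (1 + t i) := fun i => by
    have hθ := chebyshevAngle_mem_Ioo i
    refine exists_mem_closure_cumVolume_eq hE ?_ ?_
    · have : -1 < t i := by
        simpa [t] using cos_lt_cos_of_nonneg_of_le_pi hθ.1.le le_rfl hθ.2
      nlinarith
    · have : t i ≤ 1 := cos_le_one _
      show _ ≤ μ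
      nlinarith
  choose X hXE hXF using hlevel
  have hsep : ∀ i j, μ / 2 * |t i - t j| ≤ |X i - X j| := fun i j => by
    have h := (lipschitzWith_one_cumVolume
      (measure_ne_top_of_subset hE measure_Icc_lt_top.ne)).dist_le_mul (X i) (X j)
    rw [Real.dist_eq, Real.dist_eq, hXF, hXF, NNReal.coe_one, one_mul] at h
    calc μ / 2 * |t i - t j| = |μ / 2 * (1 + t i) - μ / 2 * (1 + t j)| := by
          rw [← mul_sub, add_sub_add_left_eq_sub, abs_mul, abs_of_pos (half_pos hμ)]
      _ ≤ |X i - X j| := h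
  refine ⟨X, fun i j hij => injective_cos_chebyshevAngle ?_, hXE, fun i => ?_⟩
  · have := hsep i j
    rw [hij, sub_self, abs_zero] at this
    have := abs_nonneg (t i - t j)
    exact sub_eq_zero.mp (abs_eq_zero.mp (by nlinarith))
  calc (n + 1) * (μ / 4) ^ n = (μ / 2) ^ n * ((n + 1 : ℕ) / 2 ^ (n + 1 - 1)) := by
        rw [Nat.add_sub_cancel, div_pow, div_pow, show (4 : ℝ) ^ n = 2 ^ n * 2 ^ n by
          rw [← mul_pow]; norm_num]
        push_cast
        field_simp
    _ ≤ (μ / 2) ^ n * ∏ j ∈ Finset.univ.erase i, |t i - t j| :=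
        mul_le_mul_of_nonneg_left (div_two_pow_le_prod_abs_sub_cos_chebyshevAngle i) (by positivity)
    _ = ∏ j ∈ Finset.univ.erase i, μ / 2 * |t i - t j| := by
        rw [Finset.prod_mul_distrib, Finset.prod_const,
          Finset.card_erase_of_mem (Finset.mem_univ i), Finset.card_univ, Fintype.card_fin, Nat.add_sub_cancel]
    _ ≤ ∏ j ∈ Finset.univ.erase i, |X i - X j| :=
        Finset.prod_le_prod (fun _ _ => by positivity) fun j _ => hsep i j

theorem abs_eval_le_remez {n : ℕ} {a b : ℝ} {E : Set ℝ} (hE : E ⊆ Icc a b) (hEpos : 0 < volume E)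
    {p : ℝ[X]} (hp : p.natDegree ≤ n) {x : ℝ} (hx : x ∈ Icc a b) :
    |p.eval x| ≤ (4 * (b - a) / (volume E).toReal) ^ n * ⨆ y : E, |p.eval (y : ℝ)| := by
  obtain ⟨X, hXinj, hXE, hXsep⟩ := exists_nodes_mem_closure_le_prod_abs_sub n hE hEpos
  have hμ : 0 < (volume E).toReal :=
    ENNReal.toReal_pos hEpos.ne' (measure_ne_top_of_subset hE measure_Icc_lt_top.ne)
  have hcont : Continuous fun y => |p.eval y| := p.continuous.abs
  have hbdd : BddAbove (range fun y : E => |p.eval (y : ℝ)|) := by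
    obtain ⟨C, hC⟩ := (isCompact_Icc.image hcont).bddAbove
    exact ⟨C, by rintro _ ⟨y, rfl⟩; exact hC ⟨y, hE y.2, rfl⟩⟩
  have hXab : ∀ j, X j ∈ Icc a b := fun j => closure_minimal hE isClosed_Icc (hXE j)
  have h := abs_eval_le_of_le_prod_abs_sub hXinj hp
    (fun i => hcont.le_ciSup_of_mem_closure hbdd (hXE i))
    (fun j => abs_sub_le_of_le_of_le hx.1 hx.2 (hXab j).1 (hXab j).2) (by positivity) hXsep
  calc |p.eval x| ≤ _ := h
    _ = _ := by
      rw [div_pow, div_pow, mul_pow]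
      field_simp

theorem stmt_1_general (k : ℕ) (a b : ℝ) (E : Set ℝ)
    (hE : E ⊆ Set.Icc a b) (hEpos : 0 < volume E)
    (p : Polynomial ℝ) (hdeg : p.natDegree ≤ k - 1) :
    (⨆ x : Set.Icc a b, |p.eval (x : ℝ)|)
      ≤ (4 * (volume (Set.Icc a b)).toReal / (volume E).toReal) ^ (k - 1)
          * (⨆ x : E, |p.eval (x : ℝ)|) := by
  refine Real.iSup_le (fun x => ?_) ?_
  · rw [Real.volume_Icc, ENNReal.toReal_ofReal (sub_nonneg.mpr (x.2.1.trans x.2.2))]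
    exact abs_eval_le_remez hE hEpos hdeg x.2
  · exact mul_nonneg (by positivity) (Real.iSup_nonneg fun _ => abs_nonneg _)

/-- Remez' inequality on the real line. -/
theorem stmt_1 (k : ℕ) (hk : 1 ≤ k) (a b : ℝ) (hab : a ≤ b) (E : Set ℝ)
    (hE : E ⊆ Set.Icc a b) (hEmeas : MeasurableSet E) (hEpos : 0 < volume E)
    (p : Polynomial ℝ) (hdeg : p.natDegree ≤ k - 1) :
    (⨆ x : Set.Icc a b, |p.eval (x : ℝ)|)
      ≤ (4 * (volume (Set.Icc a b)).toReal / (volume E).toReal) ^ (k - 1)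
          * (⨆ x : E, |p.eval (x : ℝ)|) :=
  stmt_1_general k a b E hE hEpos p hdeg
end

section
/- Let (E_i)_{i=1}^M be subintervals of [0,1] such that every point of [0,1] lies in at most k of them and the E_i cover [0,1], and let 0 < q < 1. Define K(x,t) = ∑_{i,j} (q^{|i−j|}/|E_{ij}|) · 1_{E_i}(t) · 1_{E_j}(x), where E_{ij} is the smallest interval containing E_i ∪ E_j. Then for every x ∈ [0,1]: ∫_0^1 K(x,t) dt ≤ 2(k+1)/(1−q). Moreover, if additionally the E_i form the supports of a partition of unity so that each x lies in at least one E_i and |E_i ∩ E_j| ≤ |E_{ij}|, the lower bound ∫_0^1 K(x,t) dt ≥ 1 also holds (in the paper the bound k is obtained from the k covering multiplicity). -/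
/-!
Integrating `K x ·` over `[0,1]` replaces `1_{E_i}(t)` by `|E_i|`, so the mass at `x` is
`∑_{i,j} w_{ij} 1_{E_j}(x)` with `w_{ij} = q^{|i-j|} |E_i| / |E_{ij}|`. Since `E_i ⊆ E_{ij}`,
`0 ≤ w_{ij} ≤ q^{|i-j|}`, and for fixed `j` the two-sided geometric sum `∑_i q^{|i-j|}` is at most
`2/(1-q)`; at most `k` indices `j` have `x ∈ E_j`. For the lower bound, the diagonal weight
`w_{jj}` equals `1` and some `E_j` contains `x`.
-/

open MeasureTheory Set Finset

section Geometric

variable {q : ℝ}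

theorem sum_pow_le_inv_one_sub_of_injOn (hq0 : 0 ≤ q) (hq1 : q < 1) {ι : Type*}
    {s : Finset ι} {g : ι → ℕ} (hg : Set.InjOn g s) : ∑ i ∈ s, q ^ g i ≤ (1 - q)⁻¹ :=
  calc ∑ i ∈ s, q ^ g i = ∑ n ∈ s.image g, q ^ n := (Finset.sum_image hg).symm
    _ ≤ ∑' n, q ^ n :=
      (summable_geometric_of_lt_one hq0 hq1).sum_le_tsum _ fun n _ => pow_nonneg hq0 n
    _ = (1 - q)⁻¹ := tsum_geometric_of_lt_one hq0 hq1

theorem sum_pow_natAbs_sub_le (hq0 : 0 ≤ q) (hq1 : q < 1) {ι : Type*} (s : Finset ι)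
    {f : ι → ℤ} (hf : Set.InjOn f s) (c : ℤ) : ∑ i ∈ s, q ^ (f i - c).natAbs ≤ 2 / (1 - q) := by
  -- on either side of `c`, `i ↦ |f i - c|` is injective, so each side is dominated by `∑ qⁿ`
  rw [← Finset.sum_filter_add_sum_filter_not s (fun i => c ≤ f i)]
  have hright := sum_pow_le_inv_one_sub_of_injOn hq0 hq1
    (s := s.filter (fun i => c ≤ f i)) (g := fun i => (f i - c).natAbs) fun a ha b hb hab => by
      simp only [coe_filter, Set.mem_ofPred_eq] at ha hb hab
      exact hf ha.1 hb.1 (by omega)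
  have hleft := sum_pow_le_inv_one_sub_of_injOn hq0 hq1
    (s := s.filter (fun i => ¬ c ≤ f i)) (g := fun i => (f i - c).natAbs) fun a ha b hb hab => by
      simp only [coe_filter, Set.mem_ofPred_eq] at ha hb hab
      exact hf ha.1 hb.1 (by omega)
  calc _ ≤ (1 - q)⁻¹ + (1 - q)⁻¹ := add_le_add hright hleft
    _ = 2 / (1 - q) := by ring

end Geometric

section Integral

theorem mul_ite_mem_mul_eq_indicator {α : Type*} (A : Set α) [∀ t, Decidable (t ∈ A)]
    (a b : ℝ) : (fun t => a * (if t ∈ A then 1 else 0) * b) = A.indicator fun _ => a * b := by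
  funext t
  by_cases ht : t ∈ A <;> simp [ht]

variable {α : Type*} [MeasurableSpace α] {μ : Measure α}

theorem integral_mul_ite_mem_mul {A : Set α} [∀ t, Decidable (t ∈ A)] (hA : MeasurableSet A)
    (a b : ℝ) : ∫ t, a * (if t ∈ A then 1 else 0) * b ∂μ = a * μ.real A * b := by
  rw [mul_ite_mem_mul_eq_indicator, integral_indicator_const _ hA, smul_eq_mul]
  ring

theorem integrable_mul_ite_mem_mul [IsFiniteMeasure μ] {A : Set α} [∀ t, Decidable (t ∈ A)]
    (hA : MeasurableSet A) (a b : ℝ) :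
    Integrable (fun t => a * (if t ∈ A then 1 else 0) * b) μ := by
  rw [mul_ite_mem_mul_eq_indicator]
  exact (integrable_const _).indicator hA

theorem integral_sum_sum_mul_ite_mem_mul [IsFiniteMeasure μ] {ι κ : Type*} (s : Finset ι)
    (s' : Finset κ) {A : ι → Set α} [∀ i t, Decidable (t ∈ A i)] (hA : ∀ i, MeasurableSet (A i))
    (a : ι → κ → ℝ) (b : κ → ℝ) :
    ∫ t, ∑ i ∈ s, ∑ j ∈ s', a i j * (if t ∈ A i then 1 else 0) * b j ∂μ
      = ∑ i ∈ s, ∑ j ∈ s', a i j * μ.real (A i) * b j := by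
  rw [integral_finsetSum _ fun i _ =>
    integrable_finsetSum _ fun j _ => integrable_mul_ite_mem_mul (hA i) _ _]
  refine Finset.sum_congr rfl fun i _ => ?_
  rw [integral_finsetSum _ fun j _ => integrable_mul_ite_mem_mul (hA i) _ _]
  exact Finset.sum_congr rfl fun j _ => integral_mul_ite_mem_mul (hA i) _ _

end Integral

section Weights

variable {a b : ℝ}

theorem sub_le_toReal_volume_Icc_min_max (hab : a ≤ b) (a' b' : ℝ) :
    b - a ≤ (volume (Icc (min a a') (max b b'))).toReal := by
  have hmin := min_le_left a a'
  have hmax := le_max_left b b'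
  rw [Real.volume_Icc, ENNReal.toReal_ofReal (by linarith)]
  linarith

theorem div_toReal_volume_Icc_min_max_mul_nonneg {r : ℝ} (hr : 0 ≤ r) (hab : a ≤ b)
    (a' b' : ℝ) : 0 ≤ r / (volume (Icc (min a a') (max b b'))).toReal * (b - a) :=
  mul_nonneg (div_nonneg hr ENNReal.toReal_nonneg) (sub_nonneg.2 hab)

theorem div_toReal_volume_Icc_min_max_mul_le {r : ℝ} (hr : 0 ≤ r) (hab : a < b) (a' b' : ℝ) :
    r / (volume (Icc (min a a') (max b b'))).toReal * (b - a) ≤ r := by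
  have hle := sub_le_toReal_volume_Icc_min_max hab.le a' b'
  rw [div_mul_eq_mul_div, div_le_iff₀ (by linarith)]
  exact mul_le_mul_of_nonneg_left hle hr

theorem div_toReal_volume_Icc_min_max_self_mul (r : ℝ) (hab : a < b) :
    r / (volume (Icc (min a a) (max b b))).toReal * (b - a) = r := by
  rw [min_self, max_self, Real.volume_Icc, ENNReal.toReal_ofReal (by linarith)]
  field_simp [(sub_pos.2 hab).ne']

end Weights

section Mass

variable {ι : Type*} [Fintype ι] {w : ι → ι → ℝ} (p : ι → Prop) [DecidablePred p]

theorem sum_sum_mul_ite_le {q : ℝ} (hq0 : 0 ≤ q) (hq1 : q < 1) {f : ι → ℤ}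
    (hf : Function.Injective f) (hw : ∀ i j, w i j ≤ q ^ (f i - f j).natAbs) :
    ∑ i, ∑ j, w i j * (if p j then 1 else 0) ≤ #{j | p j} * (2 / (1 - q)) := by
  have hcol : ∀ j, ∑ i, w i j ≤ 2 / (1 - q) := fun j =>
    (Finset.sum_le_sum fun i _ => hw i j).trans
      (sum_pow_natAbs_sub_le hq0 hq1 _ hf.injOn (f j))
  calc ∑ i, ∑ j, w i j * (if p j then 1 else 0)
      = ∑ j, (∑ i, w i j) * (if p j then 1 else 0) := by
        rw [Finset.sum_comm]; simp only [Finset.sum_mul]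
    _ ≤ ∑ j, (2 / (1 - q)) * (if p j then 1 else 0) :=
        Finset.sum_le_sum fun j _ => mul_le_mul_of_nonneg_right (hcol j) (by split_ifs <;> simp)
    _ = #{j | p j} * (2 / (1 - q)) := by
        rw [← Finset.mul_sum, Finset.sum_boole, mul_comm]

theorem one_le_sum_sum_mul_ite (hw0 : ∀ i j, 0 ≤ w i j) {j₀ : ι} (hdiag : w j₀ j₀ = 1)
    (hp : p j₀) : 1 ≤ ∑ i, ∑ j, w i j * (if p j then 1 else 0) := by
  have hterm : ∀ i j, 0 ≤ w i j * (if p j then 1 else 0) := fun i j =>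
    mul_nonneg (hw0 i j) (by split_ifs <;> simp)
  calc (1 : ℝ) = w j₀ j₀ * (if p j₀ then 1 else 0) := by simp [hdiag, hp]
    _ ≤ ∑ j, w j₀ j * (if p j then 1 else 0) :=
        Finset.single_le_sum (fun j _ => hterm j₀ j) (Finset.mem_univ j₀)
    _ ≤ ∑ i, ∑ j, w i j * (if p j then 1 else 0) :=
        Finset.single_le_sum (fun i _ => Finset.sum_nonneg fun j _ => hterm i j)
          (Finset.mem_univ j₀)

end Mass

/-- Kernel mass bounds for the positive dominating operator `T` built from
B-spline supports. -/
theorem stmt_7 (M k : ℕ) (lo hi : Fin M → ℝ) (hlen : ∀ i, lo i < hi i)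
    (hsub : ∀ i, Set.Icc (lo i) (hi i) ⊆ Set.Icc (0:ℝ) 1)
    (hmult : ∀ x ∈ Set.Icc (0:ℝ) 1,
      ((Finset.univ.filter (fun i : Fin M => x ∈ Set.Icc (lo i) (hi i))).card ≤ k))
    (hcover : ∀ x ∈ Set.Icc (0:ℝ) 1, ∃ i : Fin M, x ∈ Set.Icc (lo i) (hi i))
    (q : ℝ) (hq0 : 0 < q) (hq1 : q < 1)
    (K : ℝ → ℝ → ℝ)
    (hKdef : ∀ x t, K x t = ∑ i : Fin M, ∑ j : Fin M,
      q ^ ((i : ℤ) - (j : ℤ)).natAbs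
        / (volume (Set.Icc (min (lo i) (lo j)) (max (hi i) (hi j)))).toReal
        * (if t ∈ Set.Icc (lo i) (hi i) then (1:ℝ) else 0)
        * (if x ∈ Set.Icc (lo j) (hi j) then (1:ℝ) else 0)) :
    ∀ x ∈ Set.Icc (0:ℝ) 1,
      (∫ t in Set.Icc (0:ℝ) 1, K x t) ≤ 2 * ((k : ℝ) + 1) / (1 - q) ∧
      1 ≤ ∫ t in Set.Icc (0:ℝ) 1, K x t := by
  intro x hx
  have h1q : 0 < 1 - q := sub_pos.2 hq1
  have hmass : ∫ t in Icc (0:ℝ) 1, K x t = ∑ i : Fin M, ∑ j : Fin M,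
      q ^ ((i : ℤ) - (j : ℤ)).natAbs
        / (volume (Icc (min (lo i) (lo j)) (max (hi i) (hi j)))).toReal * (hi i - lo i)
        * (if x ∈ Icc (lo j) (hi j) then 1 else 0) := by
    simp_rw [hKdef]
    rw [integral_sum_sum_mul_ite_mem_mul _ _ fun i => measurableSet_Icc]
    refine Finset.sum_congr rfl fun i _ => Finset.sum_congr rfl fun j _ => ?_
    rw [measureReal_restrict_apply measurableSet_Icc, inter_eq_self_of_subset_left (hsub i),
      Real.volume_real_Icc_of_le (hlen i).le]
  have hw0 : ∀ i j : Fin M, 0 ≤ q ^ ((i : ℤ) - (j : ℤ)).natAbs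
      / (volume (Icc (min (lo i) (lo j)) (max (hi i) (hi j)))).toReal * (hi i - lo i) :=
    fun i j => div_toReal_volume_Icc_min_max_mul_nonneg (by positivity) (hlen i).le _ _
  refine ⟨?_, ?_⟩
  · rw [hmass]
    calc _ ≤ #{j | x ∈ Icc (lo j) (hi j)} * (2 / (1 - q)) :=
          sum_sum_mul_ite_le _ hq0.le hq1 (Nat.cast_injective.comp Fin.val_injective)
            fun i j => div_toReal_volume_Icc_min_max_mul_le (by positivity) (hlen i) _ _
      _ ≤ k * (2 / (1 - q)) := by
          gcongr
          exact_mod_cast hmult x hx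
      _ ≤ 2 * ((k : ℝ) + 1) / (1 - q) := by
          rw [mul_div_assoc', mul_comm]
          gcongr
          linarith
  · obtain ⟨j₀, hj₀⟩ := hcover x hx
    rw [hmass]
    exact one_le_sum_sum_mul_ite _ hw0 (j₀ := j₀) (by
      simpa using div_toReal_volume_Icc_min_max_self_mul 1 (hlen j₀)) hj₀
end

section
/- Let (A_j)_{j=1}^N be measurable subsets of [0,1], let ℓ : {1,…,N} → {1,…,n} be nonincreasing (ℓ(j+1) ≤ ℓ(j)), and for each j let D_j and B_j ⊆ D_j be measurable sets such that: (a) for all i, j, if i ≤ j then either D_i ⊆ D_j or |D_i ∩ D_j| = 0; (b) |B_j| ≥ c₁ · ∑_{i : ℓ(i) ≥ ℓ(j), D_i ⊆ D_j} |A_i| for a fixed constant c₁ > 0. Then there exist pairwise disjoint measurable sets φ(1), …, φ(N) with φ(j) ⊆ B_j and |φ(j)| = c₁|A_j| for every j. -/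
/-!
Choose the sets `φ(j)` greedily in the order of the indices. When `φ(j)` is chosen, the earlier
`φ(i)` can occupy a non-null part of `B_j` only if `D_i ⊆ D_j`, and then `ℓ(j) ≤ ℓ(i)`; so they
occupy at most `c₁ ∑ |A_i|` over the other indices counted in (b), which leaves room of measure
`c₁|A_j|` in `B_j`. A subset of exactly that measure exists because `t ↦ |B ∩ (-∞, t]|` is
continuous.
-/

open Classical MeasureTheory Set Filter Function
open scoped ENNReal Topology

namespace Real

variable {S : Set ℝ}

lemma lipschitzWith_one_volume_real_Iic_inter (hS : volume S ≠ ∞) :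
    LipschitzWith 1 fun t => volume.real (Iic t ∩ S) := by
  refine LipschitzWith.of_le_add fun x y => ?_
  have hcover : Iic x ∩ S ⊆ (Iic y ∩ S) ∪ Ioc y x := by
    rintro z ⟨hzx, hzS⟩
    by_cases hzy : z ≤ y
    · exact Or.inl ⟨hzy, hzS⟩
    · exact Or.inr ⟨not_le.1 hzy, hzx⟩
  have hfin : volume ((Iic y ∩ S) ∪ Ioc y x) ≠ ∞ :=
    measure_union_ne_top (measure_ne_top_of_subset inter_subset_right hS) (by simp)
  calc volume.real (Iic x ∩ S) ≤ volume.real (Iic y ∩ S) + volume.real (Ioc y x) :=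
        (measureReal_mono hcover hfin).trans (measureReal_union_le _ _)
    _ ≤ volume.real (Iic y ∩ S) + dist x y := by
        rw [volume_real_Ioc, dist_eq]
        exact add_le_add_right (max_le (le_abs_self _) (abs_nonneg _)) _

lemma tendsto_volume_Iic_inter_atTop (S : Set ℝ) :
    Tendsto (fun t => volume (Iic t ∩ S)) atTop (𝓝 (volume S)) := by
  simpa [Measure.restrict_apply measurableSet_Iic] using
    tendsto_measure_Iic_atTop (volume.restrict S)

lemma tendsto_volume_Iic_inter_atBot (hS : volume S ≠ ∞) :
    Tendsto (fun t => volume (Iic t ∩ S)) atBot (𝓝 0) := by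
  have hempty : ⋂ t : ℝ, Iic t = ∅ := iInter_Iic_eq_empty_iff.mpr (by simp)
  have h := tendsto_measure_iInter_atBot (μ := volume.restrict S)
    (fun t => measurableSet_Iic.nullMeasurableSet) monotone_Iic
    ⟨0, by simpa [Measure.restrict_apply measurableSet_Iic]
      using measure_ne_top_of_subset inter_subset_right hS⟩
  rw [hempty, measure_empty] at h
  simpa [comp_def, Measure.restrict_apply measurableSet_Iic] using h

theorem exists_subset_volume_eq (hS : MeasurableSet S) (hSfin : volume S ≠ ∞) {r : ℝ≥0∞}
    (hr : r ≤ volume S) : ∃ T ⊆ S, MeasurableSet T ∧ volume T = r := by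
  rcases hr.eq_or_lt with rfl | hlt
  · exact ⟨S, subset_rfl, hS, rfl⟩
  rcases eq_or_ne r 0 with rfl | hr0
  · exact ⟨∅, empty_subset _, .empty, measure_empty⟩
  have hfin : ∀ t, volume (Iic t ∩ S) ≠ ∞ := fun t =>
    measure_ne_top_of_subset inter_subset_right hSfin
  have hrfin : r ≠ ∞ := ne_top_of_lt hlt
  obtain ⟨a, ha⟩ := ((tendsto_volume_Iic_inter_atBot hSfin).eventually
    (gt_mem_nhds (pos_iff_ne_zero.2 hr0))).exists
  obtain ⟨b, hb⟩ := ((tendsto_volume_Iic_inter_atTop S).eventually (lt_mem_nhds hlt)).exists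
  obtain ⟨t, ht⟩ : r.toReal ∈ range fun t => volume.real (Iic t ∩ S) :=
    mem_range_of_exists_le_of_exists_ge (lipschitzWith_one_volume_real_Iic_inter hSfin).continuous
      ⟨a, ENNReal.toReal_mono hrfin ha.le⟩ ⟨b, ENNReal.toReal_mono (hfin b) hb.le⟩
  exact ⟨Iic t ∩ S, inter_subset_right, measurableSet_Iic.inter hS,
    (ENNReal.toReal_eq_toReal_iff' (hfin t) hrfin).1 ht⟩

end Real

lemma pairwise_disjoint_update_of_disjoint_iUnion {α ι : Type*} [DecidableEq ι]
    {φ : ι → Set α} (hφ : Pairwise (Disjoint on φ)) {a : ι} {T : Set α}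
    (hT : Disjoint T (⋃ i, φ i)) : Pairwise (Disjoint on update φ a T) := by
  have hT' : ∀ i, Disjoint T (φ i) := fun i => hT.mono_right (subset_iUnion φ i)
  intro i j hij
  change Disjoint (update φ a T i) (update φ a T j)
  rcases eq_or_ne i a with rfl | hi
  · simpa [update_of_ne hij.symm] using hT' j
  rcases eq_or_ne j a with rfl | hj
  · simpa [update_of_ne hi] using (hT' i).symm
  simpa [update_of_ne hi, update_of_ne hj] using hφ hij

section Greedy

variable {α ι : Type*} [MeasurableSpace α] {μ : Measure α} [Fintype ι] [LinearOrder ι]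
  {B : ι → Set α} {m : ι → ℝ≥0∞}

lemma measure_inter_iUnion_le_sum {φ : ι → Set α} {j : ι} (hφB : ∀ i, φ i ⊆ B i)
    (hφm : ∀ i < j, μ (φ i) ≤ m i) (hφj : ∀ i, j ≤ i → φ i = ∅) :
    μ (B j ∩ ⋃ i, φ i) ≤ ∑ i with i < j ∧ μ (B i ∩ B j) ≠ 0, m i := by
  rw [Finset.sum_filter, inter_iUnion]
  refine (measure_iUnion_fintype_le μ _).trans (Finset.sum_le_sum fun i _ => ?_)
  split_ifs with h
  · exact (measure_mono inter_subset_right).trans (hφm i h.1)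
  rcases lt_or_ge i j with hij | hji
  · have hnull : μ (B i ∩ B j) = 0 := by tauto
    exact (measure_mono_null (fun x hx => ⟨hφB i hx.2, hx.1⟩ : B j ∩ φ i ⊆ B i ∩ B j) hnull).le
  · simp [hφj i hji]

lemma exists_subset_sdiff_iUnion_measure_eq
    (hsplit : ∀ S, MeasurableSet S → μ S ≠ ∞ → ∀ r ≤ μ S, ∃ T ⊆ S, MeasurableSet T ∧ μ T = r)
    {φ : ι → Set α} {j : ι} (hBj : MeasurableSet (B j)) (hBjfin : μ (B j) ≠ ∞)
    (hmj : m j + ∑ i with i < j ∧ μ (B i ∩ B j) ≠ 0, m i ≤ μ (B j))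
    (hφ : ∀ i, MeasurableSet (φ i)) (hφB : ∀ i, φ i ⊆ B i) (hφm : ∀ i < j, μ (φ i) ≤ m i)
    (hφj : ∀ i, j ≤ i → φ i = ∅) :
    ∃ T ⊆ B j \ ⋃ i, φ i, MeasurableSet T ∧ μ T = m j := by
  set U := ⋃ i, φ i
  have hused : m j + μ (B j ∩ U) ≤ μ (B j) :=
    (add_le_add le_rfl (measure_inter_iUnion_le_sum hφB hφm hφj)).trans hmj
  have hfree : m j ≤ μ (B j \ U) :=
    calc m j ≤ μ (B j) - μ (B j ∩ U) :=
          ENNReal.le_sub_of_add_le_right (measure_ne_top_of_subset inter_subset_left hBjfin) hused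
      _ ≤ μ (B j \ U) := le_measure_sdiff.trans_eq (congrArg μ sdiff_self_inter)
  exact hsplit _ (hBj.diff (.iUnion hφ)) (measure_ne_top_of_subset sdiff_subset hBjfin) _ hfree

theorem exists_pairwise_disjoint_subsets_measure_eq
    (hsplit : ∀ S, MeasurableSet S → μ S ≠ ∞ → ∀ r ≤ μ S, ∃ T ⊆ S, MeasurableSet T ∧ μ T = r)
    (hB : ∀ j, MeasurableSet (B j)) (hBfin : ∀ j, μ (B j) ≠ ∞)
    (hm : ∀ j, m j + ∑ i with i < j ∧ μ (B i ∩ B j) ≠ 0, m i ≤ μ (B j)) :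
    ∃ φ : ι → Set α, (∀ j, MeasurableSet (φ j)) ∧ (∀ j, φ j ⊆ B j) ∧
      Pairwise (Disjoint on φ) ∧ ∀ j, μ (φ j) = m j := by
  suffices h : ∀ s : Finset ι, ∃ φ : ι → Set α, (∀ j, MeasurableSet (φ j)) ∧ (∀ j, φ j ⊆ B j) ∧
      Pairwise (Disjoint on φ) ∧ (∀ j ∈ s, μ (φ j) = m j) ∧ ∀ j ∉ s, φ j = ∅ by
    obtain ⟨φ, hφ, hφB, hφd, hφm, -⟩ := h Finset.univ
    exact ⟨φ, hφ, hφB, hφd, fun j => hφm j (Finset.mem_univ j)⟩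
  intro s
  induction s using Finset.induction_on_max with
  | empty =>
    exact ⟨fun _ => ∅, fun _ => .empty, fun _ => empty_subset _,
      fun _ _ _ => disjoint_bot_left, by simp, fun _ _ => rfl⟩
  | insert a s has ih =>
    obtain ⟨φ, hφ, hφB, hφd, hφm, hφs⟩ := ih
    have hφle : ∀ i < a, μ (φ i) ≤ m i := fun i _ => by
      by_cases hi : i ∈ s
      · exact (hφm i hi).le
      · simp [hφs i hi]
    have hφa : ∀ i, a ≤ i → φ i = ∅ := fun i hi => hφs i fun his => (has i his).not_ge hi
    obtain ⟨T, hTB, hT, hTm⟩ :=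
      exists_subset_sdiff_iUnion_measure_eq hsplit (hB a) (hBfin a) (hm a) hφ hφB hφle hφa
    refine ⟨update φ a T, fun j => ?_, fun j => ?_,
      pairwise_disjoint_update_of_disjoint_iUnion hφd (disjoint_sdiff_left.mono_left hTB),
      fun j hj => ?_, fun j hj => ?_⟩ <;> rcases eq_or_ne j a with rfl | hja
    · simpa using hT
    · simpa [update_of_ne hja] using hφ j
    · simpa using hTB.trans sdiff_subset
    · simpa [update_of_ne hja] using hφB j
    · simpa using hTm
    · simpa [update_of_ne hja] using hφm j ((Finset.mem_insert.1 hj).resolve_left hja)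
    · exact absurd (Finset.mem_insert_self j s) hj
    · simpa [update_of_ne hja] using hφs j fun h => hj (Finset.mem_insert_of_mem h)

end Greedy

theorem stmt_14_general (N : ℕ) (A B D : Fin N → Set ℝ)
    (hBmeas : ∀ j, MeasurableSet (B j))
    (hDsub : ∀ j, D j ⊆ Set.Icc (0:ℝ) 1)
    (hBD : ∀ j, B j ⊆ D j)
    (l : Fin N → ℕ) (hl : ∀ i j : Fin N, i ≤ j → l j ≤ l i)
    (hnest : ∀ i j : Fin N, i ≤ j → D i ⊆ D j ∨ volume (D i ∩ D j) = 0)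
    (c₁ : ℝ)
    (hlow : ∀ j : Fin N,
      ENNReal.ofReal c₁ *
          ∑ i ∈ Finset.univ.filter (fun i : Fin N => l j ≤ l i ∧ D i ⊆ D j),
            volume (A i)
        ≤ volume (B j)) :
    ∃ φ : Fin N → Set ℝ,
      (∀ j, MeasurableSet (φ j)) ∧
      (∀ j, φ j ⊆ B j) ∧
      (∀ i j, i ≠ j → Disjoint (φ i) (φ j)) ∧
      (∀ j, volume (φ j) = ENNReal.ofReal c₁ * volume (A j)) := by
  set m : Fin N → ℝ≥0∞ := fun j => ENNReal.ofReal c₁ * volume (A j)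
  have hBfin : ∀ j, volume (B j) ≠ ∞ := fun j =>
    measure_ne_top_of_subset ((hBD j).trans (hDsub j)) (by simp)
  have hoverlap : ∀ i j, i < j → volume (B i ∩ B j) ≠ 0 → l j ≤ l i ∧ D i ⊆ D j :=
    fun i j hij hB => ⟨hl i j hij.le, (hnest i j hij.le).resolve_right fun hD =>
      hB (measure_mono_null (inter_subset_inter (hBD i) (hBD j)) hD)⟩
  have hm : ∀ j, m j + ∑ i with i < j ∧ volume (B i ∩ B j) ≠ 0, m i ≤ volume (B j) := by
    intro j
    set F := Finset.univ.filter fun i : Fin N => l j ≤ l i ∧ D i ⊆ D j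
    calc m j + ∑ i with i < j ∧ volume (B i ∩ B j) ≠ 0, m i ≤ m j + ∑ i ∈ F.erase j, m i := by
          refine add_le_add le_rfl (Finset.sum_le_sum_of_subset (f := m) fun i hi => ?_)
          obtain ⟨hij, hB⟩ := (Finset.mem_filter.1 hi).2
          exact Finset.mem_erase.2 ⟨hij.ne, by simpa [F] using hoverlap i j hij hB⟩
      _ = ENNReal.ofReal c₁ * ∑ i ∈ F, volume (A i) := by
          rw [Finset.add_sum_erase F m (by simp [F]), Finset.mul_sum]
      _ ≤ volume (B j) := hlow j
  obtain ⟨φ, hφ, hφB, hφd, hφm⟩ := exists_pairwise_disjoint_subsets_measure_eq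
    (fun _ hS hSfin _ => Real.exists_subset_volume_eq hS hSfin) hBmeas hBfin hm
  exact ⟨φ, hφ, hφB, fun i j hij => hφd hij, hφm⟩

/-- Greedy selection lemma (Lemma 3.4): disjoint subsets `φ(j) ⊆ B_j` of
prescribed measures `c₁|A_j|` can be selected. -/
theorem stmt_14 (N : ℕ) (A B D : Fin N → Set ℝ)
    (hAmeas : ∀ j, MeasurableSet (A j)) (hBmeas : ∀ j, MeasurableSet (B j))
    (hDmeas : ∀ j, MeasurableSet (D j))
    (hAsub : ∀ j, A j ⊆ Set.Icc (0:ℝ) 1) (hDsub : ∀ j, D j ⊆ Set.Icc (0:ℝ) 1)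
    (hBD : ∀ j, B j ⊆ D j)
    (l : Fin N → ℕ) (hl : ∀ i j : Fin N, i ≤ j → l j ≤ l i)
    (hnest : ∀ i j : Fin N, i ≤ j → D i ⊆ D j ∨ volume (D i ∩ D j) = 0)
    (c₁ : ℝ) (hc₁ : 0 < c₁)
    (hlow : ∀ j : Fin N,
      ENNReal.ofReal c₁ *
          ∑ i ∈ Finset.univ.filter (fun i : Fin N => l j ≤ l i ∧ D i ⊆ D j),
            volume (A i)
        ≤ volume (B j)) :
    ∃ φ : Fin N → Set ℝ,
      (∀ j, MeasurableSet (φ j)) ∧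
      (∀ j, φ j ⊆ B j) ∧
      (∀ i j, i ≠ j → Disjoint (φ i) (φ j)) ∧
      (∀ j, volume (φ j) = ENNReal.ofReal c₁ * volume (A j)) :=
  stmt_14_general N A B D hBmeas hDsub hBD l hl hnest c₁ hlow
end

section
/- For a polynomial p of degree at most k−1 on a compact interval I of positive length: ‖p‖²_{L^∞(I)} ≤ 2·8^{2(k−1)} · (1/|I|) ∫_I p(x)² dx. -/
open Finset

lemma prod_dist_eq (d j : ℕ) (hj : j ≤ d) :
    ∏ i ∈ (Finset.range (d+1)).erase j, Nat.dist j i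
      = j.factorial * (d - j).factorial := by
  have hsplit : (Finset.range (d+1)).erase j
      = Finset.range j ∪ Finset.Ico (j+1) (d+1) := by
    ext i
    simp only [Finset.mem_erase, Finset.mem_range, Finset.mem_union, Finset.mem_Ico]
    omega
  have hdisj : Disjoint (Finset.range j) (Finset.Ico (j+1) (d+1)) := by
    simp only [Finset.disjoint_left, Finset.mem_range, Finset.mem_Ico]
    omega
  rw [hsplit, Finset.prod_union hdisj]
  congr 1
  · have h1 : ∀ i ∈ Finset.range j, Nat.dist j i = j - i := fun i hi =>
      Nat.dist_eq_sub_of_le_right (Finset.mem_range.mp hi).le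
    rw [Finset.prod_congr rfl h1, ← Nat.descFactorial_eq_prod_range, Nat.descFactorial_self]
  · rw [Finset.prod_Ico_eq_prod_range]
    have h2 : ∀ i ∈ Finset.range (d + 1 - (j + 1)), Nat.dist j (j + 1 + i) = i + 1 := by
      intro i _
      have : j ≤ j + 1 + i := by omega
      rw [Nat.dist_eq_sub_of_le this]
      omega
    rw [Finset.prod_congr rfl h2, Finset.prod_range_add_one_eq_factorial]
    congr 1
    omega

lemma exp_five_halves_lt : Real.exp (5/2) < 16 := by
  have h1 : Real.exp (5/2) ^ 2 = Real.exp 1 ^ 5 := by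
    rw [Real.exp_one_pow, ← Real.exp_nat_mul]
    norm_num
  have h2 : Real.exp 1 ^ 5 < 2.7182818286 ^ 5 :=
    pow_lt_pow_left₀ Real.exp_one_lt_d9 (Real.exp_pos 1).le (by norm_num)
  nlinarith [Real.exp_pos (5/2)]

lemma key_step (n : ℕ) : ((n : ℝ) + 2) ^ (2*n+3) ≤ 16 * ((n : ℝ) + 1) ^ (2*n+3) := by
  rcases Nat.eq_zero_or_pos n with h | h
  · subst h; norm_num
  · set x : ℝ := (n : ℝ) + 1 with hx
    have hx1 : (1:ℝ) ≤ x := by have : (0:ℝ) ≤ (n:ℝ) := Nat.cast_nonneg n; simp only [hx]; linarith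
    have hx0 : (0:ℝ) < x := by linarith
    have hle : (n : ℝ) + 2 ≤ x * Real.exp (1/x) := by
      have h1 : (1:ℝ) + 1/x ≤ Real.exp (1/x) := by
        have := Real.add_one_le_exp (1/x); linarith
      have h2 : x * (1 + 1/x) = (n:ℝ) + 2 := by field_simp [hx]; ring
      nlinarith
    have h2 : ((n : ℝ) + 2) ^ (2*n+3) ≤ (x * Real.exp (1/x)) ^ (2*n+3) :=
      pow_le_pow_left₀ (by positivity) hle _
    have h3 : (x * Real.exp (1/x)) ^ (2*n+3)
        = x ^ (2*n+3) * Real.exp (((2*n+3 : ℕ) : ℝ) * (1/x)) := by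
      rw [mul_pow, Real.exp_nat_mul]
    have h4 : Real.exp (((2*n+3 : ℕ) : ℝ) * (1/x)) ≤ Real.exp (5/2) := by
      apply Real.exp_le_exp.mpr
      rw [mul_one_div, div_le_iff₀ hx0]
      have hn : (1:ℝ) ≤ (n:ℝ) := by exact_mod_cast h
      push_cast
      simp only [hx]
      nlinarith
    have h5 : Real.exp (((2*n+3 : ℕ) : ℝ) * (1/x)) ≤ 16 := h4.trans exp_five_halves_lt.le
    calc ((n : ℝ) + 2) ^ (2*n+3)
        ≤ x ^ (2*n+3) * Real.exp (((2*n+3 : ℕ) : ℝ) * (1/x)) := by rw [← h3]; exact h2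
      _ ≤ x ^ (2*n+3) * 16 := by nlinarith [pow_pos hx0 (2*n+3)]
      _ = 16 * x ^ (2*n+3) := by ring

lemma key_num (d : ℕ) :
    ((d : ℝ) + 1) ^ (2*d+1) ≤ 2 * 16 ^ d * (d.factorial : ℝ) ^ 2 := by
  induction d with
  | zero => norm_num
  | succ n ih =>
    have h1 : ((n : ℝ) + 2) ^ (2*n+3) ≤ 16 * ((n : ℝ) + 1) ^ (2*n+3) := key_step n
    have h2 : ((n : ℝ) + 1) ^ (2*n+3) = ((n:ℝ)+1)^2 * ((n:ℝ)+1)^(2*n+1) := by ring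
    have hfac : ((n+1).factorial : ℝ) = ((n:ℝ)+1) * (n.factorial : ℝ) := by
      push_cast [Nat.factorial_succ]; ring
    have goal_eq : ((n+1 : ℕ) : ℝ) + 1 = (n : ℝ) + 2 := by push_cast; ring
    rw [goal_eq]
    have hexp : 2*(n+1)+1 = 2*n+3 := by omega
    rw [hexp]
    calc ((n : ℝ) + 2) ^ (2*n+3) ≤ 16 * (((n:ℝ)+1)^2 * ((n:ℝ)+1)^(2*n+1)) := by
          rw [← h2]; exact h1
      _ ≤ 16 * (((n:ℝ)+1)^2 * (2 * 16 ^ n * (n.factorial : ℝ) ^ 2)) := by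
          have : (0:ℝ) ≤ ((n:ℝ)+1)^2 := sq_nonneg _
          nlinarith [sq_nonneg ((n:ℝ)+1)]
      _ = 2 * 16 ^ (n+1) * (((n:ℝ)+1) * (n.factorial : ℝ)) ^ 2 := by ring
      _ = 2 * 16 ^ (n+1) * ((n+1).factorial : ℝ) ^ 2 := by rw [hfac]

lemma cast_nat_dist (j i : ℕ) : ((Nat.dist j i : ℕ) : ℝ) = |(j:ℝ) - (i:ℝ)| := by
  rcases le_total j i with h | h
  · rw [Nat.dist_eq_sub_of_le h, Nat.cast_sub h, abs_sub_comm,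
      abs_of_nonneg (sub_nonneg.mpr (Nat.cast_le.mpr h))]
  · rw [Nat.dist_eq_sub_of_le_right h, Nat.cast_sub h,
      abs_of_nonneg (sub_nonneg.mpr (Nat.cast_le.mpr h))]

lemma basis_bound (d : ℕ) (u h : ℝ) (hh0 : 0 < h) (t : ℝ) (ht : t ∈ Set.Icc 0 h)
    (x : ℝ) (hx : x ∈ Set.Icc u (u + ((d:ℝ)+1) * h)) (j : ℕ) (hj : j ∈ Finset.range (d+1)) :
    |Polynomial.eval x (Lagrange.basis (Finset.range (d+1)) (fun i : ℕ => u + t + i * h) j)|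
      ≤ ((d:ℝ)+1)^d * (d.choose j) / (d.factorial : ℝ) := by
  have hjd : j ≤ d := by simpa [Nat.lt_succ_iff] using hj
  rw [Lagrange.basis, Polynomial.eval_prod, Finset.abs_prod]
  have hcard : ((Finset.range (d+1)).erase j).card = d := by
    rw [Finset.card_erase_of_mem hj, Finset.card_range]; omega
  have key : ∀ i ∈ (Finset.range (d+1)).erase j,
      |Polynomial.eval x (Lagrange.basisDivisor (u + t + j * h) (u + t + i * h))|
        ≤ ((d:ℝ)+1) / (Nat.dist j i : ℝ) := by
    intro i hi
    obtain ⟨hij, hir⟩ := Finset.mem_erase.mp hi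
    have hid : i ≤ d := by simpa [Nat.lt_succ_iff] using hir
    have hdistpos : 0 < (Nat.dist j i : ℝ) := by
      have : Nat.dist j i ≠ 0 := fun hc => hij (Nat.eq_of_dist_eq_zero hc).symm
      exact_mod_cast Nat.pos_of_ne_zero this
    have heval : Polynomial.eval x (Lagrange.basisDivisor (u + t + j * h) (u + t + i * h))
        = ((u + t + j * h) - (u + t + i * h))⁻¹ * (x - (u + t + i * h)) := by
      simp [Lagrange.basisDivisor]
    rw [heval, abs_mul, abs_inv]
    have hgap : |(u + t + j * h) - (u + t + i * h)| = (Nat.dist j i : ℝ) * h := by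
      have : (u + t + j * h) - (u + t + i * h) = ((j:ℝ) - (i:ℝ)) * h := by ring
      rw [this, abs_mul, abs_of_pos hh0, cast_nat_dist]
    rw [hgap]
    have ht0 : 0 ≤ t := ht.1
    have hth : t ≤ h := ht.2
    have hnode_mem : u ≤ u + t + i * h ∧ u + t + i * h ≤ u + ((d:ℝ)+1) * h := by
      constructor
      · nlinarith [Nat.cast_nonneg (α := ℝ) i]
      · have : (i:ℝ) ≤ (d:ℝ) := by exact_mod_cast hid
        nlinarith
    have hxd : |x - (u + t + i * h)| ≤ ((d:ℝ)+1) * h := by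
      rw [abs_sub_le_iff]
      constructor
      · linarith [hx.2, hnode_mem.1]
      · linarith [hx.1, hnode_mem.2]
    calc ((Nat.dist j i : ℝ) * h)⁻¹ * |x - (u + t + i * h)|
        ≤ ((Nat.dist j i : ℝ) * h)⁻¹ * (((d:ℝ)+1) * h) := by
          apply mul_le_mul_of_nonneg_left hxd
          positivity
      _ = ((d:ℝ)+1) / (Nat.dist j i : ℝ) := by
          field_simp
  calc ∏ i ∈ (Finset.range (d+1)).erase j,
        |Polynomial.eval x (Lagrange.basisDivisor (u + t + j * h) (u + t + i * h))|
      ≤ ∏ i ∈ (Finset.range (d+1)).erase j, ((d:ℝ)+1) / (Nat.dist j i : ℝ) := by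
        apply Finset.prod_le_prod (fun i _ => abs_nonneg _) key
    _ = ((d:ℝ)+1)^d / ((j.factorial : ℝ) * ((d-j).factorial : ℝ)) := by
        rw [Finset.prod_div_distrib, Finset.prod_const, hcard]
        congr 1
        rw [← Nat.cast_prod, prod_dist_eq d j hjd]
        push_cast
        ring
    _ = ((d:ℝ)+1)^d * (d.choose j) / (d.factorial : ℝ) := by
        have hch : (d.choose j : ℝ) * ((j.factorial : ℝ) * ((d-j).factorial : ℝ))
            = (d.factorial : ℝ) := by
          exact_mod_cast congrArg (Nat.cast (R := ℝ))
            (by rw [← Nat.choose_mul_factorial_mul_factorial hjd]; ring)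
        have h1 : (0:ℝ) < (j.factorial : ℝ) := by exact_mod_cast j.factorial_pos
        have h2 : (0:ℝ) < ((d-j).factorial : ℝ) := by exact_mod_cast (d-j).factorial_pos
        have h3 : (0:ℝ) < (d.factorial : ℝ) := by exact_mod_cast d.factorial_pos
        rw [eq_div_iff h3.ne', div_mul_eq_mul_div,
          div_eq_iff (by positivity : ((j.factorial:ℝ) * ((d-j).factorial:ℝ)) ≠ 0)]
        calc ((d:ℝ)+1)^d * (d.factorial : ℝ)
            = ((d:ℝ)+1)^d * ((d.choose j : ℝ) * ((j.factorial : ℝ) * ((d-j).factorial : ℝ))) := by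
              rw [hch]
          _ = ((d:ℝ)+1)^d * (d.choose j) * ((j.factorial:ℝ) * ((d-j).factorial:ℝ)) := by ring


open MeasureTheory Set

/-- Reverse Hölder inequality for polynomials of degree at most `k − 1`:
`‖p‖²_{L^∞(I)} ≤ 2·8^{2(k−1)} · |I|⁻¹ ∫_I p²`. -/
theorem stmt_19 (k : ℕ) (hk : 1 ≤ k) (u v : ℝ) (huv : u < v)
    (p : Polynomial ℝ) (hdeg : p.natDegree ≤ k - 1) :
    (⨆ x : Set.Icc u v, |p.eval (x : ℝ)|) ^ 2
      ≤ 2 * 8 ^ (2 * (k - 1)) * ((v - u)⁻¹ * ∫ x in Set.Icc u v, (p.eval x) ^ 2) := by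
  have huv' : u ≤ v := huv.le
  set d := k - 1 with hd
  set L := v - u with hLdef
  have hL0 : 0 < L := sub_pos.mpr huv
  set h := L / ((d:ℝ)+1) with hhdef
  have hdpos : (0:ℝ) < (d:ℝ)+1 := by positivity
  have hh0 : 0 < h := div_pos hL0 hdpos
  have hLh : L = ((d:ℝ)+1) * h := by rw [hhdef]; field_simp
  have hvL : v = u + ((d:ℝ)+1) * h := by rw [← hLh, hLdef]; ring
  have hfp : (0:ℝ) < (d.factorial : ℝ) := by exact_mod_cast d.factorial_pos
  set a : ℕ → ℝ := fun j => ((d:ℝ)+1)^d * (d.choose j) / (d.factorial : ℝ) with hadef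
  have ha0 : ∀ j, 0 ≤ a j := fun j => by
    apply div_nonneg _ hfp.le
    positivity
  set A : ℝ := ((d:ℝ)+1)^d * 2^d / (d.factorial : ℝ) with hAdef
  have hA0 : 0 ≤ A := by
    apply div_nonneg _ hfp.le
    positivity
  have hAsum : ∑ j ∈ Finset.range (d+1), a j = A := by
    rw [hadef, hAdef]
    rw [← Finset.sum_div]
    congr 1
    rw [← Finset.mul_sum]
    congr 1
    rw [← Nat.cast_sum, Nat.sum_range_choose]
    push_cast
    ring
  -- injectivity of nodes
  have hinj : ∀ t : ℝ, Set.InjOn (fun i : ℕ => u + t + i * h)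
      ((Finset.range (d+1) : Finset ℕ) : Set ℕ) := by
    intro t i _ i' _ hii'
    simp only at hii'
    have : (i:ℝ) * h = (i':ℝ) * h := by linarith
    have h2 : (i:ℝ) = (i':ℝ) := mul_right_cancel₀ hh0.ne' this
    exact_mod_cast h2
  have hdeg' : p.degree < ((Finset.range (d+1)).card : ℕ) := by
    rw [Finset.card_range]
    refine lt_of_le_of_lt p.degree_le_natDegree ?_
    exact_mod_cast Nat.lt_succ_of_le hdeg
  -- pointwise interpolation bound
  have hp_bound : ∀ t ∈ Set.Icc (0:ℝ) h, ∀ x ∈ Set.Icc u v,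
      |p.eval x| ≤ ∑ j ∈ Finset.range (d+1), a j * |p.eval (u + t + (j:ℝ)*h)| := by
    intro t ht x hx
    have hrepr := Lagrange.eq_interpolate (v := fun i : ℕ => u + t + (i:ℝ) * h) (hinj t) hdeg'
    conv_lhs => rw [hrepr]
    rw [Lagrange.interpolate_apply, Polynomial.eval_finset_sum]
    refine (Finset.abs_sum_le_sum_abs _ _).trans ?_
    apply Finset.sum_le_sum
    intro j hj
    rw [Polynomial.eval_mul, Polynomial.eval_C, abs_mul]
    rw [mul_comm (a j) _]
    apply mul_le_mul_of_nonneg_left _ (abs_nonneg _)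
    have hx' : x ∈ Set.Icc u (u + ((d:ℝ)+1) * h) := by rwa [← hvL]
    exact basis_bound d u h hh0 t ht x hx' j hj
  haveI : Nonempty (Set.Icc u v) := Set.nonempty_Icc_subtype huv'
  set M := ⨆ x : Set.Icc u v, |p.eval (x:ℝ)| with hMdef
  have h0mem : (0:ℝ) ∈ Set.Icc (0:ℝ) h := ⟨le_refl _, hh0.le⟩
  have hbdd : BddAbove (Set.range fun x : Set.Icc u v => |p.eval (x:ℝ)|) := by
    refine ⟨∑ j ∈ Finset.range (d+1), a j * |p.eval (u + 0 + (j:ℝ)*h)|, ?_⟩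
    rintro y ⟨x, rfl⟩
    exact hp_bound 0 h0mem x x.2
  have hM0 : 0 ≤ M := by
    refine le_trans (abs_nonneg (p.eval u)) ?_
    exact le_ciSup hbdd ⟨u, ⟨le_refl u, huv'⟩⟩
  have hMle : ∀ t ∈ Set.Icc (0:ℝ) h,
      M ≤ ∑ j ∈ Finset.range (d+1), a j * |p.eval (u + t + (j:ℝ)*h)| := by
    intro t ht
    exact ciSup_le (fun x => hp_bound t ht x x.2)
  -- Cauchy-Schwarz step
  have hCS : ∀ t ∈ Set.Icc (0:ℝ) h,
      M^2 ≤ A * ∑ j ∈ Finset.range (d+1), a j * (p.eval (u + t + (j:ℝ)*h))^2 := by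
    intro t ht
    have h1 : M^2 ≤ (∑ j ∈ Finset.range (d+1), a j * |p.eval (u + t + (j:ℝ)*h)|)^2 :=
      pow_le_pow_left₀ hM0 (hMle t ht) 2
    refine h1.trans ?_
    have h2 := Finset.sum_sq_le_sum_mul_sum_of_sq_eq_mul (Finset.range (d+1))
      (r := fun j => a j * |p.eval (u + t + (j:ℝ)*h)|)
      (f := a) (g := fun j => a j * (p.eval (u + t + (j:ℝ)*h))^2)
      (fun j _ => ha0 j)
      (fun j _ => mul_nonneg (ha0 j) (sq_nonneg _))
      (fun j _ => by rw [mul_pow, sq_abs]; ring)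
    rw [hAsum] at h2
    exact h2
  -- continuity facts
  have contFj : ∀ j : ℕ, Continuous fun t : ℝ => (p.eval (u + t + (j:ℝ)*h))^2 := by
    intro j
    apply Continuous.pow
    exact (Polynomial.continuous_aeval p).comp
      ((continuous_const.add continuous_id).add continuous_const)
  have contF : Continuous fun x : ℝ => (p.eval x)^2 := (Polynomial.continuous_aeval p).pow 2
  have hIcc : (∫ x in Set.Icc u v, (p.eval x)^2) = ∫ x in u..v, (p.eval x)^2 := by
    rw [intervalIntegral.integral_of_le huv', MeasureTheory.integral_Icc_eq_integral_Ioc]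
  set Iv := ∫ x in u..v, (p.eval x)^2 with hIvdef
  have hIv0 : 0 ≤ Iv := intervalIntegral.integral_nonneg huv' (fun x _ => sq_nonneg _)
  have hFint : IntervalIntegrable (fun x => (p.eval x)^2) volume u v :=
    contF.intervalIntegrable u v
  -- window integrals
  have hwin : ∀ j ∈ Finset.range (d+1),
      (∫ t in (0:ℝ)..h, (p.eval (u + t + (j:ℝ)*h))^2) ≤ Iv := by
    intro j hj
    have hjd : (j:ℝ) ≤ (d:ℝ) := by
      have : j ≤ d := by simpa [Nat.lt_succ_iff] using hj
      exact_mod_cast this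
    have hcongr : (∫ t in (0:ℝ)..h, (p.eval (u + t + (j:ℝ)*h))^2)
        = ∫ t in (0:ℝ)..h, (p.eval (t + (u + (j:ℝ)*h)))^2 := by
      apply intervalIntegral.integral_congr
      intro s _
      congr 1
      ring_nf
    rw [hcongr]
    have hshift := intervalIntegral.integral_comp_add_right (a := (0:ℝ)) (b := h)
      (fun x => (p.eval x)^2) (u + (j:ℝ)*h)
    rw [hshift]
    apply intervalIntegral.integral_mono_interval (c := u) (d := v)
    · have : (0:ℝ) ≤ (j:ℝ) * h := by positivity
      linarith
    · linarith [hh0.le]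
    · rw [hvL]
      have : ((j:ℝ)+1) * h ≤ ((d:ℝ)+1) * h := by
        apply mul_le_mul_of_nonneg_right _ hh0.le
        linarith
      linarith
    · exact Filter.Eventually.of_forall (fun x => sq_nonneg _)
    · exact hFint
  -- integrate the pointwise bound
  have hSint : IntervalIntegrable
      (fun t => A * ∑ j ∈ Finset.range (d+1), a j * (p.eval (u + t + (j:ℝ)*h))^2)
      volume 0 h := by
    apply Continuous.intervalIntegrable
    apply continuous_const.mul
    apply continuous_finset_sum
    intro j _
    exact continuous_const.mul (contFj j)
  have hmono := intervalIntegral.integral_mono_on (μ := volume) hh0.le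
    (intervalIntegrable_const (c := M^2)) hSint hCS
  have hconstint : (∫ _ in (0:ℝ)..h, M^2) = h * M^2 := by
    simp [intervalIntegral.integral_const, smul_eq_mul]
  have hlin : (∫ t in (0:ℝ)..h,
        A * ∑ j ∈ Finset.range (d+1), a j * (p.eval (u + t + (j:ℝ)*h))^2)
      = A * ∑ j ∈ Finset.range (d+1), a j *
          ∫ t in (0:ℝ)..h, (p.eval (u + t + (j:ℝ)*h))^2 := by
    rw [intervalIntegral.integral_const_mul]
    congr 1
    rw [intervalIntegral.integral_finset_sum]
    · apply Finset.sum_congr rfl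
      intro j _
      rw [intervalIntegral.integral_const_mul]
    · intro j _
      exact (continuous_const.mul (contFj j)).intervalIntegrable 0 h
  have hmain : h * M^2 ≤ A^2 * Iv := by
    rw [hconstint, hlin] at hmono
    refine hmono.trans ?_
    have hsum_le : (∑ j ∈ Finset.range (d+1), a j *
          ∫ t in (0:ℝ)..h, (p.eval (u + t + (j:ℝ)*h))^2)
        ≤ ∑ j ∈ Finset.range (d+1), a j * Iv := by
      apply Finset.sum_le_sum
      intro j hj
      exact mul_le_mul_of_nonneg_left (hwin j hj) (ha0 j)
    calc A * ∑ j ∈ Finset.range (d+1), a j *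
          ∫ t in (0:ℝ)..h, (p.eval (u + t + (j:ℝ)*h))^2
        ≤ A * ∑ j ∈ Finset.range (d+1), a j * Iv :=
          mul_le_mul_of_nonneg_left hsum_le hA0
      _ = A^2 * Iv := by rw [← Finset.sum_mul, hAsum]; ring
  -- numeric bound on the constant
  have hconst : A^2 * ((d:ℝ)+1) ≤ 2 * 8^(2*d) := by
    have hA2 : A^2 * ((d:ℝ)+1) = ((d:ℝ)+1)^(2*d+1) * 4^d / (d.factorial:ℝ)^2 := by
      have h4 : (4:ℝ)^d = 2^d * 2^d := by rw [← mul_pow]; norm_num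
      rw [hAdef]
      field_simp
      rw [h4]
      ring
    rw [hA2, div_le_iff₀ (by positivity)]
    have h64 : (8:ℝ)^(2*d) = 64^d := by
      rw [pow_mul]; norm_num
    calc ((d:ℝ)+1)^(2*d+1) * 4^d
        ≤ (2 * 16^d * (d.factorial:ℝ)^2) * 4^d :=
          mul_le_mul_of_nonneg_right (key_num d) (by positivity)
      _ = 2 * (16*4:ℝ)^d * (d.factorial:ℝ)^2 := by rw [mul_pow]; ring
      _ = 2 * 8^(2*d) * (d.factorial:ℝ)^2 := by rw [h64]; norm_num
  -- finish
  rw [hIcc]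
  have hstep : M^2 ≤ A^2 * ((d:ℝ)+1) * (L⁻¹ * Iv) := by
    have hML : L * M^2 ≤ ((d:ℝ)+1) * (A^2 * Iv) := by
      rw [hLh]
      calc ((d:ℝ)+1) * h * M^2 = ((d:ℝ)+1) * (h * M^2) := by ring
        _ ≤ ((d:ℝ)+1) * (A^2 * Iv) := mul_le_mul_of_nonneg_left hmain hdpos.le
    have hLinv : (0:ℝ) < L⁻¹ := inv_pos.mpr hL0
    calc M^2 = L⁻¹ * (L * M^2) := by field_simp
      _ ≤ L⁻¹ * (((d:ℝ)+1) * (A^2 * Iv)) := by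
          apply mul_le_mul_of_nonneg_left hML hLinv.le
      _ = A^2 * ((d:ℝ)+1) * (L⁻¹ * Iv) := by ring
  refine hstep.trans ?_
  apply mul_le_mul_of_nonneg_right hconst
  positivity
end
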